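/- arXiv:2305.00372 — 6 statements merged into one kernel-verified Lean document; each statement's English description precedes it below -/
import Mathlib

section
/- Let L be a dcpo and U an upper subset of L. If for every well-ordered chain C of L with sup C ∈ U we have C ∩ U ≠ ∅, then U is Scott open. -/
open Set TopologicalSpace

universe u

section OrderDefs

variable {X : Type u}

/-- `U` is an upper set with respect to the relation `le`. -/
def IsUpperSetWrt (le : X → X → Prop) (U : Set X) : Prop :=
  ∀ ⦃x⦄, x ∈ U → ∀ ⦃y⦄, le x y → y ∈ U

/-- `s` is an upper bound of `D` with respect to `le`. -/
def IsUBWrt (le : X → X → Prop) (D : Set X) (s : X) : Prop := ∀ d ∈ D, le d s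

/-- `s` is a least upper bound (supremum) of `D` with respect to `le`. -/
def IsSupWrt (le : X → X → Prop) (D : Set X) (s : X) : Prop :=
  IsUBWrt le D s ∧ ∀ t, IsUBWrt le D t → le s t

/-- `D` is a (nonempty) directed subset with respect to `le`. -/
def DirectedSubset (le : X → X → Prop) (D : Set X) : Prop :=
  D.Nonempty ∧ ∀ a ∈ D, ∀ b ∈ D, ∃ c ∈ D, le a c ∧ le b c

/-- `U` is Scott open with respect to `le`: an upper set inaccessible by directed suprema. -/
def ScottOpenWrt (le : X → X → Prop) (U : Set X) : Prop :=
  IsUpperSetWrt le U ∧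
    ∀ D, DirectedSubset le D → ∀ s, IsSupWrt le D s → s ∈ U → (D ∩ U).Nonempty

/-- The Scott topology determined by the relation `le`. -/
def scottTop (le : X → X → Prop) : TopologicalSpace X where
  IsOpen := ScottOpenWrt le
  isOpen_univ := by
    refine ⟨fun x _ y _ => trivial, fun D hD s _ _ => ?_⟩
    obtain ⟨d, hd⟩ := hD.1
    exact ⟨d, hd, trivial⟩
  isOpen_inter := by
    rintro U V ⟨hUup, hUd⟩ ⟨hVup, hVd⟩
    refine ⟨fun x hx y hxy => ⟨hUup hx.1 hxy, hVup hx.2 hxy⟩, ?_⟩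
    rintro D hD s hs ⟨hsU, hsV⟩
    obtain ⟨a, haD, haU⟩ := hUd D hD s hs hsU
    obtain ⟨b, hbD, hbV⟩ := hVd D hD s hs hsV
    obtain ⟨c, hcD, hac, hbc⟩ := hD.2 a haD b hbD
    exact ⟨c, hcD, hUup haU hac, hVup hbV hbc⟩
  isOpen_sUnion := by
    intro S hS
    refine ⟨fun x hx y hxy => ?_, ?_⟩
    · obtain ⟨U, hU, hxU⟩ := hx
      exact ⟨U, hU, (hS U hU).1 hxU hxy⟩
    · rintro D hD s hs ⟨U, hU, hsU⟩
      obtain ⟨d, hdD, hdU⟩ := (hS U hU).2 D hD s hs hsU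
      exact ⟨d, hdD, U, hU, hdU⟩

end OrderDefs

section TopDefs

variable {X : Type u} [TopologicalSpace X]

/-- The specialization order of a topological space: `x ≤ y` iff `x ∈ cl {y}`. -/
def specLE (x y : X) : Prop := x ∈ closure ({y} : Set X)

/-- The upward closure of `A` in the specialization order. -/
def upSet (A : Set X) : Set X := {y | ∃ a ∈ A, specLE a y}

/-- `V` is way below `U`: every open cover of `U` admits a finite subfamily covering `V`. -/
def WayBelow (V U : Set X) : Prop :=
  ∀ S : Set (Set X), (∀ W ∈ S, IsOpen W) → U ⊆ ⋃₀ S →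
    ∃ F : Finset (Set X), ↑F ⊆ S ∧ V ⊆ ⋃₀ (F : Set (Set X))

/-- A space is core compact if its lattice of open sets is continuous, i.e. every open
set is the union of the open sets way below it. -/
def CoreCompact (X : Type u) [TopologicalSpace X] : Prop :=
  ∀ U : Set X, IsOpen U → ∀ x ∈ U, ∃ V : Set X, IsOpen V ∧ x ∈ V ∧ WayBelow V U

/-- `V` is open in the core compactly generated topology:
preimages under every continuous map from a core compact space are open. -/
def ccgOpen (X : Type u) [TopologicalSpace X] (V : Set X) : Prop :=
  ∀ (C : Type u) (tC : TopologicalSpace C), CoreCompact C →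
    ∀ ρ : C → X, Continuous ρ → IsOpen (ρ ⁻¹' V)

/-- The core compactly generated topology `𝒞X`. -/
def ccgTopology (X : Type u) [TopologicalSpace X] : TopologicalSpace X where
  IsOpen := ccgOpen X
  isOpen_univ := by intro C tC _ ρ hρ; simpa using isOpen_univ
  isOpen_inter := by
    intro U V hU hV C tC hc ρ hρ
    exact (hU C tC hc ρ hρ).inter (hV C tC hc ρ hρ)
  isOpen_sUnion := by
    intro S hS C tC hc ρ hρ
    rw [preimage_sUnion]
    exact isOpen_biUnion fun t ht => hS t ht C tC hc ρ hρ

/-- A space is core compactly generated if its topology coincides with the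
core compactly generated topology. -/
def CCGenerated (X : Type u) [t : TopologicalSpace X] : Prop := ccgTopology X = t

/-- A set is saturated if it is the intersection of the open sets containing it. -/
def Saturated (K : Set X) : Prop := K = ⋂₀ {U : Set X | IsOpen U ∧ K ⊆ U}

/-- A T₀ space is well-filtered if every filtered family of nonempty compact saturated sets
whose intersection is contained in an open set has a member contained in that open set. -/
def WellFiltered (X : Type u) [TopologicalSpace X] : Prop :=
  T0Space X ∧ ∀ 𝒦 : Set (Set X), 𝒦.Nonempty →
    (∀ K ∈ 𝒦, K.Nonempty ∧ IsCompact K ∧ Saturated K) →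
    (∀ K₁ ∈ 𝒦, ∀ K₂ ∈ 𝒦, ∃ K₃ ∈ 𝒦, K₃ ⊆ K₁ ∧ K₃ ⊆ K₂) →
    ∀ U : Set X, IsOpen U → ⋂₀ 𝒦 ⊆ U → ∃ K ∈ 𝒦, K ⊆ U

/-- A T₀ space is ω-well-filtered if the well-filteredness condition holds for
countable filtered families of nonempty compact saturated sets. -/
def OmegaWellFiltered (X : Type u) [TopologicalSpace X] : Prop :=
  T0Space X ∧ ∀ K : ℕ → Set X,
    (∀ n, (K n).Nonempty ∧ IsCompact (K n) ∧ Saturated (K n)) →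
    (∀ m n, ∃ k, K k ⊆ K m ∧ K k ⊆ K n) →
    ∀ U : Set X, IsOpen U → (⋂ n, K n) ⊆ U → ∃ n, K n ⊆ U

/-- A space is sober if it is T₀ and every irreducible closed set is the closure of a
(unique) point. -/
def SoberSpace (X : Type u) [TopologicalSpace X] : Prop :=
  T0Space X ∧ ∀ A : Set X, IsIrreducible A → IsClosed A → ∃! x : X, A = closure ({x} : Set X)

/-- A T₀ space is a monotone convergence space if the closure of every directed subset
(in the specialization order) is the closure of a point. -/
def MonotoneConvergenceSpace (X : Type u) [TopologicalSpace X] : Prop :=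
  T0Space X ∧ ∀ D : Set X, DirectedSubset specLE D → ∃ x : X, closure D = closure ({x} : Set X)

/-- The hull-kernel style topology on a family of subsets of `X`, generated by the sets
`U^s = {A | A ∩ U ≠ ∅}` for `U` open in `X`. -/
def hullTop (S : Set X → Prop) : TopologicalSpace {A : Set X // S A} :=
  generateFrom {s : Set {A : Set X // S A} |
    ∃ U : Set X, IsOpen U ∧ s = {A : {A : Set X // S A} | ((A : Set X) ∩ U).Nonempty}}

end TopDefs

/-! Induction on the cardinality of a directed set `D` with `sup D ∈ U` (Iwamura's argument).
A countable `D` contains a cofinal increasing sequence. An uncountable `D`, enumerated along its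
initial ordinal, is the union of an increasing well-ordered family of directed subsets of smaller
cardinality: close each initial segment of the enumeration under a choice of binary upper bounds.
The suprema of these subsets form a well-ordered chain with supremum `sup D`, so one of them lies
in `U`, and the induction hypothesis applies to the corresponding subset. -/

open Cardinal

section BinaryClosure

variable {α : Type u} (f : α → α → α)

def binaryClosureStep (B : Set α) : Set α := B ∪ image2 f B B

def binaryClosure (A : Set α) : Set α := ⋃ n : ℕ, (binaryClosureStep f)^[n] A

variable {f}

theorem subset_binaryClosure (A : Set α) : A ⊆ binaryClosure f A :=
  subset_iUnion_of_subset 0 subset_rfl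

theorem binaryClosure_mono : Monotone (binaryClosure f) := fun _ _ hAB =>
  iUnion_mono fun n => Monotone.iterate
    (fun _ _ h => union_subset_union h (image2_subset h h)) n hAB

theorem apply_mem_binaryClosure {A : Set α} {a b : α} (ha : a ∈ binaryClosure f A)
    (hb : b ∈ binaryClosure f A) : f a b ∈ binaryClosure f A := by
  have hiter : Monotone fun n => (binaryClosureStep f)^[n] A :=
    monotone_nat_of_le_succ fun n => by
      rw [Function.iterate_succ_apply']
      exact subset_union_left
  obtain ⟨m, ham⟩ := mem_iUnion.1 ha
  obtain ⟨n, hbn⟩ := mem_iUnion.1 hb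
  refine mem_iUnion.2 ⟨max m n + 1, ?_⟩
  rw [Function.iterate_succ_apply']
  exact Or.inr (mem_image2_of_mem (hiter (le_max_left m n) ham) (hiter (le_max_right m n) hbn))

theorem binaryClosure_subset {A D : Set α} (hAD : A ⊆ D)
    (hD : ∀ a ∈ D, ∀ b ∈ D, f a b ∈ D) : binaryClosure f A ⊆ D := by
  refine iUnion_subset fun n => ?_
  induction n with
  | zero => exact hAD
  | succ n ih =>
    rw [Function.iterate_succ_apply']
    rintro _ (hx | ⟨a, ha, b, hb, rfl⟩)
    exacts [ih hx, hD a (ih ha) b (ih hb)]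

theorem mk_binaryClosure_le (A : Set α) : #(binaryClosure f A) ≤ max #A ℵ₀ := by
  set m := max #A ℵ₀
  have hm : ℵ₀ ≤ m := le_max_right _ _
  have hiter : ∀ n, #((binaryClosureStep f)^[n] A) ≤ m := by
    intro n
    induction n with
    | zero => exact le_max_left _ _
    | succ n ih =>
      rw [Function.iterate_succ_apply']
      calc _ ≤ m + m * m :=
            (mk_union_le _ _).trans (add_le_add ih (mk_image2_le.trans (mul_le_mul' ih ih)))
        _ = m := by rw [mul_eq_self hm, add_eq_self hm]
  rw [← lift_le.{0}]
  calc _ ≤ lift.{u} #ℕ * ⨆ n, lift.{0} #((binaryClosureStep f)^[n] A) := mk_iUnion_le_lift _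
    _ ≤ lift.{0} m * lift.{0} m := by
      refine mul_le_mul' ?_ (ciSup_le' fun n => lift_le.2 (hiter n))
      simpa using hm
    _ = lift.{0} m := mul_eq_self (aleph0_le_lift.2 hm)

end BinaryClosure

section Directed

variable {L : Type u} [Preorder L]

theorem DirectedOn.exists_monotone_cofinal_seq {D : Set L} [Countable D] (hne : D.Nonempty)
    (hD : DirectedOn (· ≤ ·) D) :
    ∃ c : ℕ → L, Monotone c ∧ (∀ n, c n ∈ D) ∧ ∀ d ∈ D, ∃ n, d ≤ c n := by
  have : Encodable D := Encodable.ofCountable D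
  let above : D → Order.Cofinal D := fun d =>
    ⟨Ici d, fun x => by
      obtain ⟨z, hz, hdz, hxz⟩ := hD d d.2 x x.2
      exact ⟨⟨z, hz⟩, hdz, hxz⟩⟩
  let c := Order.sequenceOfCofinals ⟨hne.some, hne.some_mem⟩ above
  refine ⟨fun n => c n, (Subtype.mono_coe _).comp (Order.sequenceOfCofinals.monotone _ _),
    fun n => (c n).2, fun d hd => ⟨Encodable.encode (⟨d, hd⟩ : D) + 1, ?_⟩⟩
  exact Order.sequenceOfCofinals.encode_mem _ above ⟨d, hd⟩

theorem DirectedOn.exists_monotone_cover {D : Set L} (hD : DirectedOn (· ≤ ·) D)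
    (hD_uncountable : ℵ₀ < #D) :
    ∃ E : (#D).ord.ToType → Set L, Monotone E ∧ D ⊆ ⋃ i, E i ∧
      (∀ i, E i ⊆ D) ∧ (∀ i, (E i).Nonempty) ∧ (∀ i, DirectedOn (· ≤ ·) (E i)) ∧
      ∀ i, #(E i) < #D := by
  have : Nonempty L := (mk_ne_zero_iff.1 (aleph0_pos.trans hD_uncountable).ne').map Subtype.val
  choose! f hfD hfa hfb using hD
  obtain ⟨e⟩ : Nonempty ((#D).ord.ToType ≃ D) := Cardinal.eq.1 (mk_ord_toType _)
  let A : (#D).ord.ToType → Set L := fun i => (fun j => (e j : L)) '' Iic i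
  have hAD : ∀ i, A i ⊆ D := by
    rintro i _ ⟨j, -, rfl⟩
    exact (e j).2
  -- `A i` is small because `(#D).ord` is an initial ordinal.
  have hA : ∀ i, #(A i) < #D := fun i =>
    calc #(A i) ≤ #(Iic i) := mk_image_le
      _ = #(insert i (Iio i) : Set _) := by rw [Iio_insert]
      _ ≤ #(Iio i) + 1 := mk_insert_le
      _ < #D := add_lt_of_lt hD_uncountable.le (by simpa using mk_Iio_lt i)
        (one_lt_aleph0.trans hD_uncountable)
  have hED : ∀ i, binaryClosure f (A i) ⊆ D := fun i => binaryClosure_subset (hAD i) hfD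
  refine ⟨fun i => binaryClosure f (A i),
    fun i j hij => binaryClosure_mono (image_mono (Iic_subset_Iic.2 hij)), fun d hd => ?_, hED,
    fun i => ⟨e i, subset_binaryClosure _ ⟨i, self_mem_Iic, rfl⟩⟩,
    fun i a ha b hb => ⟨f a b, apply_mem_binaryClosure ha hb, hfa a (hED i ha) b (hED i hb),
      hfb a (hED i ha) b (hED i hb)⟩,
    fun i => (mk_binaryClosure_le _).trans_lt (max_lt (hA i) hD_uncountable)⟩
  exact mem_iUnion.2
    ⟨e.symm ⟨d, hd⟩, subset_binaryClosure _ ⟨e.symm ⟨d, hd⟩, self_mem_Iic, by simp⟩⟩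

theorem exists_mem_of_monotone_cofinal {U : Set L}
    (hchain : ∀ C : Set L, IsChain (· ≤ ·) C → C.IsWF →
      ∀ s, IsLUB C s → s ∈ U → (C ∩ U).Nonempty)
    {ι : Type*} [LinearOrder ι] [WellFoundedLT ι] {t : ι → L} (ht : Monotone t)
    {D : Set L} {s : L} (hs : IsLUB D s) (hsU : s ∈ U) (hts : ∀ i, t i ≤ s)
    (hcofinal : ∀ d ∈ D, ∃ i, d ≤ t i) : ∃ i, t i ∈ U := by
  have hwf : (range t).IsWF := by
    simpa using ((IsPWO.of_linearOrder univ).image_of_monotone ht).isWF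
  have hlub : IsLUB (range t) s := by
    refine ⟨forall_mem_range.2 hts, fun u hu => hs.2 fun d hd => ?_⟩
    obtain ⟨i, hdi⟩ := hcofinal d hd
    exact hdi.trans (hu (mem_range_self i))
  obtain ⟨_, ⟨i, rfl⟩, hiU⟩ := hchain _ ht.isChain_range hwf s hlub hsU
  exact ⟨i, hiU⟩

theorem DirectedOn.inter_nonempty_of_isLUB_mem {U : Set L}
    (hdcpo : ∀ D : Set L, D.Nonempty → DirectedOn (· ≤ ·) D → ∃ s, IsLUB D s)
    (hchain : ∀ C : Set L, IsChain (· ≤ ·) C → C.IsWF →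
      ∀ s, IsLUB C s → s ∈ U → (C ∩ U).Nonempty)
    {D : Set L} (hne : D.Nonempty) (hD : DirectedOn (· ≤ ·) D) {s : L} (hs : IsLUB D s)
    (hsU : s ∈ U) : (D ∩ U).Nonempty := by
  generalize hκ : #D = κ
  induction κ using WellFoundedLT.induction generalizing D s with
  | ind κ ih =>
    rcases le_or_gt #D ℵ₀ with hcount | huncount
    · have : Countable D := mk_le_aleph0_iff.1 hcount
      obtain ⟨c, hc, hcD, hcofinal⟩ := hD.exists_monotone_cofinal_seq hne
      obtain ⟨n, hnU⟩ := exists_mem_of_monotone_cofinal hchain hc hs hsU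
        (fun n => hs.1 (hcD n)) hcofinal
      exact ⟨c n, hcD n, hnU⟩
    · obtain ⟨E, hE, hDE, hEsub, hEne, hEdir, hEcard⟩ := hD.exists_monotone_cover huncount
      choose t ht using fun i => hdcpo (E i) (hEne i) (hEdir i)
      have htmono : Monotone t := fun i j hij => (ht i).mono (ht j) (hE hij)
      obtain ⟨i, hiU⟩ := exists_mem_of_monotone_cofinal hchain htmono hs hsU
        (fun i => (ht i).mono hs (hEsub i)) fun d hd => by
          obtain ⟨i, hdi⟩ := mem_iUnion.1 (hDE hd)
          exact ⟨i, (ht i).1 hdi⟩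
      obtain ⟨x, hxE, hxU⟩ := ih _ (hκ ▸ hEcard i) (hEne i) (hEdir i) (ht i) hiU rfl
      exact ⟨x, hEsub i hxE, hxU⟩

end Directed

/-- In a dcpo `L`, an upper set `U` such that every well-ordered chain whose
supremum lies in `U` meets `U` is Scott open. -/
theorem stmt0 {L : Type u} [PartialOrder L]
    (hdcpo : ∀ D : Set L, DirectedSubset (· ≤ · : L → L → Prop) D →
      ∃ s : L, IsSupWrt (· ≤ ·) D s)
    (U : Set L) (hup : IsUpperSetWrt (· ≤ · : L → L → Prop) U)
    (hchain : ∀ C : Set L, IsChain (· ≤ ·) C → C.IsWF →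
      ∀ s : L, IsSupWrt (· ≤ ·) C s → s ∈ U → (C ∩ U).Nonempty) :
    ScottOpenWrt (· ≤ · : L → L → Prop) U :=
  ⟨hup, fun _ hD _ hs hsU =>
    DirectedOn.inter_nonempty_of_isLUB_mem (fun D hne hD => hdcpo D ⟨hne, hD⟩) hchain hD.1 hD.2
      hs hsU⟩
end

section
/- Let X be a monotone convergence space with topology τ. Then every set that is open in the core compactly generated topology of X is Scott open with respect to the specialization order of X; that is, CX ⊆ σ(X). -/
open Set TopologicalSpace

universe u

/-!
A directed set `D` together with an upper bound `s` lying in the closure of `D` carries a core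
compact topology for which the inclusion into `X` is continuous: the upper sets that meet `D`
whenever they contain `s`. Each point `x` of such an open set `U` lies above some `d ∈ D ∩ U`,
and the upward closure of `d` is an open neighbourhood of `x` contained in every open set
containing `d`, hence way below `U`. A `𝒞X`-open set therefore pulls back to an open set of this
space. With `D = {x, y}` and `s = y` this makes it an upper set; in a monotone convergence space
the supremum of a directed set lies in its closure, which gives inaccessibility by directed
suprema.
-/

section DirBoundTop

variable {X : Type u} [TopologicalSpace X]

lemma specLE_iff_specializes {x y : X} : specLE x y ↔ y ⤳ x :=
  specializes_iff_mem_closure.symm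

lemma specLE_refl (x : X) : specLE x x := subset_closure (mem_singleton x)

lemma specLE_trans {x y z : X} (hxy : specLE x y) (hyz : specLE y z) : specLE x z :=
  specLE_iff_specializes.2
    ((specLE_iff_specializes.1 hyz).trans (specLE_iff_specializes.1 hxy))

lemma wayBelow_of_forall_isOpen {V U : Set X} {d : X} (hdU : d ∈ U)
    (hV : ∀ W, IsOpen W → d ∈ W → V ⊆ W) : WayBelow V U := by
  intro S hS hUS
  obtain ⟨W, hWS, hdW⟩ := hUS hdU
  exact ⟨{W}, by simpa using hWS, by simpa using hV W (hS W hWS) hdW⟩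

def dirBoundTop (D : Set X) (s : X) (hD : DirectedSubset specLE D) :
    TopologicalSpace (insert s D : Set X) where
  IsOpen U := IsUpperSetWrt (fun a b => specLE a.1 b.1) U ∧
    ((⟨s, mem_insert s D⟩ : (insert s D : Set X)) ∈ U → ∃ b ∈ U, b.1 ∈ D)
  isOpen_univ := by
    obtain ⟨d, hd⟩ := hD.1
    exact ⟨fun _ _ _ _ => trivial, fun _ => ⟨⟨d, mem_insert_of_mem s hd⟩, trivial, hd⟩⟩
  isOpen_inter := by
    rintro U V ⟨hUup, hUs⟩ ⟨hVup, hVs⟩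
    refine ⟨fun a ha b hab => ⟨hUup ha.1 hab, hVup ha.2 hab⟩, fun hs => ?_⟩
    obtain ⟨a, haU, haD⟩ := hUs hs.1
    obtain ⟨b, hbV, hbD⟩ := hVs hs.2
    obtain ⟨c, hcD, hac, hbc⟩ := hD.2 a.1 haD b.1 hbD
    exact ⟨⟨c, mem_insert_of_mem s hcD⟩, ⟨hUup haU hac, hVup hbV hbc⟩, hcD⟩
  isOpen_sUnion := by
    intro S hS
    refine ⟨fun a ⟨U, hUS, haU⟩ b hab => ⟨U, hUS, (hS U hUS).1 haU hab⟩, ?_⟩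
    rintro ⟨U, hUS, hsU⟩
    obtain ⟨b, hbU, hbD⟩ := (hS U hUS).2 hsU
    exact ⟨b, ⟨U, hUS, hbU⟩, hbD⟩

variable {D : Set X} {s : X}

lemma coreCompact_dirBoundTop (hD : DirectedSubset specLE D) (hub : IsUBWrt specLE D s) :
    @CoreCompact _ (dirBoundTop D s hD) := by
  let := dirBoundTop D s hD
  rintro U ⟨hUup, hUs⟩ x hxU
  obtain ⟨d, hdU, hdD, hdx⟩ : ∃ d ∈ U, d.1 ∈ D ∧ specLE d.1 x.1 := by
    rcases mem_insert_iff.1 x.2 with hxs | hxD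
    · obtain rfl : x = ⟨s, mem_insert s D⟩ := Subtype.ext hxs
      obtain ⟨d, hdU, hdD⟩ := hUs hxU
      exact ⟨d, hdU, hdD, hub d.1 hdD⟩
    · exact ⟨x, hxU, hxD, specLE_refl _⟩
  refine ⟨{c | specLE d.1 c.1}, ⟨fun a ha b hab => specLE_trans ha hab,
    fun _ => ⟨d, specLE_refl d.1, hdD⟩⟩, hdx,
    wayBelow_of_forall_isOpen hdU fun W hW hdW c hc => hW.1 hdW hc⟩

lemma continuous_val_dirBoundTop (hD : DirectedSubset specLE D) (hs : s ∈ closure D) :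
    @Continuous _ X (dirBoundTop D s hD) _ Subtype.val := by
  let := dirBoundTop D s hD
  refine continuous_def.2 fun O hO => ⟨fun a ha b hab => ?_, fun hsO => ?_⟩
  · exact (specLE_iff_specializes.1 hab).mem_open hO ha
  · obtain ⟨d, hdO, hdD⟩ := mem_closure_iff.1 hs O hO hsO
    exact ⟨⟨d, mem_insert_of_mem s hdD⟩, hdO, hdD⟩

lemma ccgOpen.isOpen_preimage_val_dirBoundTop {V : Set X} (hV : ccgOpen X V)
    (hD : DirectedSubset specLE D) (hub : IsUBWrt specLE D s) (hs : s ∈ closure D) :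
    @IsOpen _ (dirBoundTop D s hD) (Subtype.val ⁻¹' V) :=
  hV _ _ (coreCompact_dirBoundTop hD hub) _ (continuous_val_dirBoundTop hD hs)

lemma ccgOpen.isUpperSetWrt {V : Set X} (hV : ccgOpen X V) : IsUpperSetWrt specLE V := by
  intro x hx y hxy
  have hub : IsUBWrt specLE {x, y} y := by
    rintro d (rfl | rfl)
    exacts [hxy, specLE_refl _]
  have hD : DirectedSubset specLE {x, y} :=
    ⟨insert_nonempty x {y}, fun a ha b hb => ⟨y, mem_insert_of_mem x rfl, hub a ha, hub b hb⟩⟩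
  have hopen :=
    hV.isOpen_preimage_val_dirBoundTop hD hub (subset_closure (mem_insert_of_mem x rfl))
  exact hopen.1 (x := ⟨x, mem_insert_of_mem y (mem_insert x {y})⟩) hx
    (y := ⟨y, mem_insert y _⟩) hxy

lemma MonotoneConvergenceSpace.mem_closure_of_isSupWrt (h : MonotoneConvergenceSpace X)
    (hD : DirectedSubset specLE D) (hs : IsSupWrt specLE D s) : s ∈ closure D := by
  obtain ⟨z, hz⟩ := h.2 D hD
  have hzub : IsUBWrt specLE D z := fun d hd => by
    simpa only [specLE, ← hz] using subset_closure hd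
  rw [hz]
  exact hs.2 z hzub

lemma ccgOpen.inter_nonempty_of_isSupWrt (h : MonotoneConvergenceSpace X) {V : Set X}
    (hV : ccgOpen X V) (hD : DirectedSubset specLE D) (hs : IsSupWrt specLE D s) (hsV : s ∈ V) :
    (D ∩ V).Nonempty := by
  obtain ⟨b, hbV, hbD⟩ := (hV.isOpen_preimage_val_dirBoundTop hD hs.1
    (h.mem_closure_of_isSupWrt hD hs)).2 hsV
  exact ⟨b.1, hbD, hbV⟩

end DirBoundTop

/-- for a monotone convergence space `X`, every set open in the core compactly
generated topology of `X` is Scott open with respect to the specialization order. -/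
theorem stmt2 {X : Type u} [TopologicalSpace X] (h : MonotoneConvergenceSpace X) :
    ∀ V : Set X, ccgOpen X V → ScottOpenWrt (specLE : X → X → Prop) V :=
  fun _ hV => ⟨hV.isUpperSetWrt, fun _ hD _ hs hsV => hV.inter_nonempty_of_isSupWrt h hD hs hsV⟩
end

section
/- For any T₀ space X, every set open in the core compactly generated topology of X is an upper set with respect to the specialization order of X; in particular the core compactly generated topology has the same specialization order as X. -/
/-!
A two-point subspace `{x, y}` of `X` is finite, hence core compact, so a core compactly generated
open set `V` pulls back to an open, and in particular upper, subset of it. Since the inclusion of a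
subspace reflects specialization, `x ∈ V` and `x ≤ y` force `y ∈ V`. Since moreover `τ ⊆ 𝒞X`,
specialization in `𝒞X` implies specialization in `τ`, and the converse is the upper-set property
just shown.
-/

open Set TopologicalSpace

universe u

open Topology

lemma specLE_iff_forall_isOpen {X : Type u} [TopologicalSpace X] {x y : X} :
    specLE x y ↔ ∀ U : Set X, IsOpen U → x ∈ U → y ∈ U :=
  specializes_iff_mem_closure.symm.trans specializes_iff_forall_open

lemma IsOpen.isUpperSetWrt_specLE {X : Type u} [TopologicalSpace X] {U : Set X} (hU : IsOpen U) :
    IsUpperSetWrt (specLE : X → X → Prop) U :=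
  fun _ hx _ hxy => specLE_iff_forall_isOpen.mp hxy U hU hx

lemma specLE_iff_of_le {X : Type u} {t₁ t₂ : TopologicalSpace X} (hle : t₁ ≤ t₂)
    (hup : ∀ V : Set X, IsOpen[t₁] V → IsUpperSetWrt (@specLE X t₂) V) {x y : X} :
    @specLE X t₁ x y ↔ @specLE X t₂ x y := by
  simp only [specLE_iff_forall_isOpen]
  exact ⟨fun h U hU => h U (TopologicalSpace.le_def.mp hle U hU),
    fun h U hU hx => hup U hU hx (specLE_iff_forall_isOpen.mpr h)⟩

lemma IsCompact.wayBelow_self {X : Type u} [TopologicalSpace X] {U : Set X} (hU : IsCompact U) :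
    WayBelow U U := by
  intro S hS hUS
  obtain ⟨F, hFS, hF, hUF⟩ :=
    hU.elim_finite_subcover_image (c := id) hS (by simpa [sUnion_eq_biUnion] using hUS)
  refine ⟨hF.toFinset, by simpa using hFS, ?_⟩
  simpa [sUnion_eq_biUnion] using hUF

lemma coreCompact_of_noetherianSpace (C : Type u) [TopologicalSpace C] [NoetherianSpace C] :
    CoreCompact C :=
  fun U hU _ hx => ⟨U, hU, hx, (NoetherianSpace.isCompact U).wayBelow_self⟩

lemma IsOpen.ccgOpen {X : Type u} [TopologicalSpace X] {U : Set X} (hU : IsOpen U) :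
    ccgOpen X U :=
  fun _ _ _ _ hρ => hρ.isOpen_preimage U hU

lemma ccgTopology_le (X : Type u) [t : TopologicalSpace X] : ccgTopology X ≤ t :=
  TopologicalSpace.le_def.mpr fun _ hU => IsOpen.ccgOpen hU

lemma ccgOpen.isUpperSetWrt_specLE {X : Type u} [TopologicalSpace X] {V : Set X}
    (hV : ccgOpen X V) : IsUpperSetWrt (specLE : X → X → Prop) V := by
  intro x hx y hxy
  let S : Set X := {x, y}
  have hS : IsOpen (((↑) : S → X) ⁻¹' V) :=
    hV S _ (coreCompact_of_noetherianSpace S) _ continuous_subtype_val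
  have hxyS : specLE (⟨x, .inl rfl⟩ : S) ⟨y, .inr rfl⟩ := by
    rw [specLE, ← specializes_iff_mem_closure] at hxy ⊢
    exact IsInducing.subtypeVal.specializes_iff.mp hxy
  exact hS.isUpperSetWrt_specLE (x := ⟨x, .inl rfl⟩) hx hxyS

theorem stmt3_general {X : Type u} [tX : TopologicalSpace X] :
    (∀ V : Set X, ccgOpen X V → IsUpperSetWrt (specLE : X → X → Prop) V) ∧
      (∀ x y : X, @specLE X (ccgTopology X) x y ↔ @specLE X tX x y) := by
  have hup (V : Set X) (hV : ccgOpen X V) : IsUpperSetWrt (specLE : X → X → Prop) V :=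
    hV.isUpperSetWrt_specLE
  exact ⟨hup, fun _ _ => specLE_iff_of_le (ccgTopology_le X) hup⟩

/-- for a T₀ space `X`, every core compactly generated open set is an upper
set in the specialization order; in particular the core compactly generated topology has
the same specialization order as `X`. -/
theorem stmt3 {X : Type u} [tX : TopologicalSpace X] [T0Space X] :
    (∀ V : Set X, ccgOpen X V → IsUpperSetWrt (specLE : X → X → Prop) V) ∧
      (∀ x y : X, @specLE X (ccgTopology X) x y ↔ @specLE X tX x y) :=
  stmt3_general (tX := tX)
end

section
/- Let P be a well-filtered dcpo (with the Scott topology) that is not sober and suppose every irreducible closed subset of ΣP is either a principal lower set ↓x or all of P. Then the core compactly generated topology of the standard sobrification P^s of ΣP equals the Scott topology on the poset (IRR(P), ⊆) of irreducible closed subsets ordered by inclusion. -/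
open Set TopologicalSpace

universe u

/-- The Scott topology of a partial order. -/
def sigmaTop (P : Type u) [PartialOrder P] : TopologicalSpace P := scottTop (· ≤ ·)

/-- Irreducible closed subsets of the Scott space of `P`. -/
def IrrCl (P : Type u) [PartialOrder P] (A : Set P) : Prop :=
  @IsIrreducible P (sigmaTop P) A ∧ @IsClosed P (sigmaTop P) A

/-- The standard sobrification of the Scott space of `P`. -/
abbrev Sobrification (P : Type u) [PartialOrder P] := {A : Set P // IrrCl P A}

/-- The hull-kernel topology on the standard sobrification. -/
def sobrTop (P : Type u) [PartialOrder P] : TopologicalSpace (Sobrification P) :=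
  @hullTop P (sigmaTop P) (IrrCl P)

/-!
Here `P^s` consists of the sets `↓x` and `P`, and `P` is not the closure of a point. A Scott open
`V ⊆ P^s` is `U^s`, possibly together with `P`, where `U = {x | ↓x ∈ V}` is Scott open in `P`;
so it is core compactly generated open once `ρ⁻¹{P}` is open for every continuous `ρ : C → P^s`
from a core compact `C`. If some `c ∈ ρ⁻¹{P}` had no neighbourhood inside `ρ⁻¹{P}`, every
neighbourhood `W` of `c` would give, through an interpolating sequence `W = O₀ ≫ O₁ ≫ ⋯` of
neighbourhoods of `c`, a compact saturated set `⋂ {U | ∃ n, Oₙ ⊆ ρ⁻¹(U^s)}`; these sets are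
nonempty because points near `c` go to some `↓x`, they form a filtered family, and their
intersection is empty, against well-filteredness. Their compactness is where the description of
the irreducible closed sets takes the place of sobriety.

Conversely, a core compactly generated open set is Scott open: a directed set with its supremum
adjoined as a limit point is a core compact space mapping continuously into `P^s`.
-/

open Topology

section WayBelow

variable {C : Type u} [TopologicalSpace C] {U V : Set C} {O : ℕ → Set C}

theorem WayBelow.subset (hU : IsOpen U) (h : WayBelow V U) : V ⊆ U := by
  obtain ⟨F, hF, hVF⟩ := h {U} (by simpa using hU) (by simp)
  exact hVF.trans (sUnion_subset fun W hW => (hF hW : W = U).le)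

theorem WayBelow.mono_left {V' : Set C} (h : WayBelow V U) (hV' : V' ⊆ V) : WayBelow V' U :=
  fun S hS hUS => (h S hS hUS).imp fun _ hF => ⟨hF.1, hV'.trans hF.2⟩

theorem WayBelow.mono_right {U' : Set C} (h : WayBelow V U) (hU' : U ⊆ U') : WayBelow V U' :=
  fun S hS hUS => h S hS (hU'.trans hUS)

theorem WayBelow.exists_finset_subset_iUnion {ι : Type*} {f : ι → Set C} (h : WayBelow V U)
    (hf : ∀ i, IsOpen (f i)) (hUf : U ⊆ ⋃ i, f i) : ∃ s : Finset ι, V ⊆ ⋃ i ∈ s, f i := by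
  classical
  obtain ⟨F, hF, hVF⟩ := h (range f) (forall_mem_range.2 hf) (by rwa [sUnion_range])
  choose g hg using fun W (hW : W ∈ F) => hF hW
  refine ⟨F.attach.image fun W => g W.1 W.2, hVF.trans ?_⟩
  rintro x ⟨W, hWF, hxW⟩
  refine mem_biUnion (Finset.mem_image_of_mem _ (F.mem_attach ⟨W, hWF⟩)) ?_
  rwa [hg W hWF]

theorem WayBelow.exists_subset_of_directedOn {𝒟 : Set (Set C)} (h : WayBelow V U)
    (h𝒟 : ∀ W ∈ 𝒟, IsOpen W) (hne : 𝒟.Nonempty) (hdir : DirectedOn (· ⊆ ·) 𝒟)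
    (hU : U ⊆ ⋃₀ 𝒟) : ∃ W ∈ 𝒟, V ⊆ W := by
  obtain ⟨F, hF, hVF⟩ := h 𝒟 h𝒟 hU
  obtain ⟨W, hW, hFW⟩ :=
    Finset.sup_le_of_le_directed 𝒟 hne hdir F fun Z hZ => ⟨Z, hF hZ, le_rfl⟩
  exact ⟨W, hW, hVF.trans (Finset.sup_id_set_eq_sUnion F ▸ hFW)⟩

theorem wayBelow_biUnion_finset {ι : Type*} {s : Finset ι} {f : ι → Set C}
    (h : ∀ i ∈ s, WayBelow (f i) U) : WayBelow (⋃ i ∈ s, f i) U := by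
  classical
  intro S hS hUS
  choose! F hFS hfF using fun i hi => h i hi S hS hUS
  refine ⟨s.biUnion F, fun W hW => ?_, iUnion₂_subset fun i hi => (hfF i hi).trans ?_⟩
  · obtain ⟨i, hi, hWi⟩ := Finset.mem_biUnion.1 hW
    exact hFS i hi hWi
  · exact sUnion_mono (Finset.coe_subset.2 (Finset.subset_biUnion_of_mem F hi))

theorem exists_wayBelow_interpolant (hcc : CoreCompact C) (hU : IsOpen U) (h : WayBelow V U) :
    ∃ W, IsOpen W ∧ WayBelow V W ∧ WayBelow W U := by
  let ι := {p : Set C × Set C // IsOpen p.1 ∧ IsOpen p.2 ∧ WayBelow p.1 p.2 ∧ WayBelow p.2 U}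
  have hcover : U ⊆ ⋃ p : ι, p.1.1 := fun x hx => by
    obtain ⟨W, hW, hxW, hWU⟩ := hcc U hU x hx
    obtain ⟨Z, hZ, hxZ, hZW⟩ := hcc W hW x hxW
    exact mem_iUnion.2 ⟨⟨(Z, W), hZ, hW, hZW, hWU⟩, hxZ⟩
  obtain ⟨s, hs⟩ := h.exists_finset_subset_iUnion (fun p => p.2.1) hcover
  refine ⟨⋃ p ∈ s, p.1.2, isOpen_biUnion fun p _ => p.2.2.1, ?_,
    wayBelow_biUnion_finset fun p _ => p.2.2.2.2⟩
  exact (wayBelow_biUnion_finset fun p hp => p.2.2.2.1.mono_right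
    (subset_biUnion_of_mem (u := fun p : ι => p.1.2) hp)).mono_left hs

theorem exists_wayBelow_seq (hcc : CoreCompact C) (hU : IsOpen U) (h : WayBelow V U) :
    ∃ O : ℕ → Set C, O 0 = U ∧ (∀ n, IsOpen (O n)) ∧ (∀ n, WayBelow (O (n + 1)) (O n)) ∧
      ∀ n, V ⊆ O n := by
  choose next hnext using fun W : {W : Set C // IsOpen W ∧ WayBelow V W} =>
    exists_wayBelow_interpolant hcc W.2.1 W.2.2
  let step (W : {W : Set C // IsOpen W ∧ WayBelow V W}) :
      {W : Set C // IsOpen W ∧ WayBelow V W} :=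
    ⟨next W, (hnext W).1, (hnext W).2.1⟩
  let O (n : ℕ) := step^[n] ⟨U, hU, h⟩
  refine ⟨fun n => (O n).1, rfl, fun n => (O n).2.1, fun n => ?_,
    fun n => (O n).2.2.subset (O n).2.1⟩
  simpa only [O, Function.iterate_succ_apply'] using (hnext (O n)).2.2

theorem antitone_of_wayBelow (hO : ∀ n, IsOpen (O n)) (hOO : ∀ n, WayBelow (O (n + 1)) (O n)) :
    Antitone O :=
  antitone_nat_of_succ_le fun n => (hOO n).subset (hO n)

/-- Zorn: a maximal open set containing `W₀` but no `O n` has irreducible complement. -/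
theorem exists_isIrreducible_disjoint_of_wayBelow (hO : ∀ n, IsOpen (O n))
    (hOO : ∀ n, WayBelow (O (n + 1)) (O n)) {W₀ : Set C} (hW₀ : IsOpen W₀)
    (h : ∀ n, ¬O n ⊆ W₀) : ∃ F, IsIrreducible F ∧ Disjoint F W₀ ∧ ∀ n, (F ∩ O n).Nonempty := by
  let 𝒵 := {W | IsOpen W ∧ ∀ n, ¬O n ⊆ W}
  have hchains : ∀ ch ⊆ 𝒵, IsChain (· ⊆ ·) ch → ch.Nonempty → ∃ ub ∈ 𝒵, ∀ s ∈ ch, s ⊆ ub := by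
    refine fun ch hch hchain hne => ⟨⋃₀ ch, ⟨isOpen_sUnion fun W hW => (hch hW).1, fun n hn => ?_⟩,
      fun W hW => subset_sUnion_of_mem hW⟩
    obtain ⟨W, hWch, hW⟩ := (hOO n).exists_subset_of_directedOn (fun W hW => (hch hW).1) hne
      hchain.directedOn hn
    exact (hch hWch).2 (n + 1) hW
  obtain ⟨W, hW₀W, hW⟩ := zorn_subset_nonempty 𝒵 hchains W₀ ⟨hW₀, h⟩
  have hmeets (n : ℕ) : (Wᶜ ∩ O n).Nonempty := by
    obtain ⟨x, hxO, hxW⟩ := not_subset.1 (hW.1.2 n)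
    exact ⟨x, hxW, hxO⟩
  have hgrow (u : Set C) (hu : IsOpen u) (hWu : (Wᶜ ∩ u).Nonempty) : ∃ n, O n ⊆ W ∪ u := by
    by_contra! hno
    obtain ⟨x, hxW, hxu⟩ := hWu
    exact hxW (hW.2 ⟨hW.1.1.union hu, hno⟩ subset_union_left (Or.inr hxu))
  refine ⟨Wᶜ, ⟨(hmeets 0).mono inter_subset_left, fun u v hu hv hWu hWv => ?_⟩,
    disjoint_compl_left.mono_right hW₀W, hmeets⟩
  obtain ⟨m, hm⟩ := hgrow u hu hWu
  obtain ⟨n, hn⟩ := hgrow v hv hWv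
  obtain ⟨x, hxW, hxO⟩ := hmeets (max m n)
  have hanti := antitone_of_wayBelow hO hOO
  exact ⟨x, hxW, (hm (hanti (le_max_left m n) hxO)).resolve_left hxW,
    (hn (hanti (le_max_right m n) hxO)).resolve_left hxW⟩

end WayBelow

theorem isOpen_scott_iff {α : Type*} [Preorder α] {s : Set α} :
    IsOpen[scott α univ] s ↔ IsUpperSet s ∧ DirSupInacc s := by
  let _ := scott α univ
  have : IsScott α univ := ⟨rfl⟩
  rw [IsScott.isOpen_iff_isUpperSet_and_dirSupInaccOn (D := univ), dirSupInaccOn_univ]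

theorem scottTop_eq_scott (α : Type u) [Preorder α] : scottTop (X := α) (· ≤ ·) = scott α univ := by
  ext s
  rw [isOpen_scott_iff]
  exact and_congr ⟨fun h _ _ hab ha => h ha hab, fun h _ ha _ hab => h hab ha⟩
    ⟨fun h _ hne hdir _ ha has => h _ ⟨hne, hdir⟩ _ ha has, fun h _ hD _ hs => h hD.1 hD.2 hs⟩

namespace WithTop

variable (ι : Type u) [Preorder ι] [Nonempty ι] [IsDirectedOrder ι]

/-- `WithTop ι` with `⊤` a limit of the directed set `ι`. -/
def limitTopology : TopologicalSpace (WithTop ι) where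
  IsOpen O := IsUpperSet O ∧ (⊤ ∈ O → ∃ i : ι, (i : WithTop ι) ∈ O)
  isOpen_univ := ⟨isUpperSet_univ, fun _ => ⟨Classical.arbitrary ι, trivial⟩⟩
  isOpen_inter O₁ O₂ h₁ h₂ := by
    refine ⟨h₁.1.inter h₂.1, fun hO => ?_⟩
    obtain ⟨i, hi⟩ := h₁.2 hO.1
    obtain ⟨j, hj⟩ := h₂.2 hO.2
    obtain ⟨k, hik, hjk⟩ := exists_ge_ge i j
    exact ⟨k, h₁.1 (coe_le_coe.2 hik) hi, h₂.1 (coe_le_coe.2 hjk) hj⟩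
  isOpen_sUnion 𝒪 h := by
    refine ⟨isUpperSet_sUnion fun O hO => (h O hO).1, fun ⟨O, hO, hOtop⟩ => ?_⟩
    obtain ⟨i, hi⟩ := (h O hO).2 hOtop
    exact ⟨i, O, hO, hi⟩

theorem coreCompact_limitTopology : @CoreCompact (WithTop ι) (limitTopology ι) := by
  let _ := limitTopology ι
  intro O hO x hx
  obtain ⟨i, hiO, hix⟩ : ∃ i : ι, (i : WithTop ι) ∈ O ∧ (i : WithTop ι) ≤ x := by
    cases x using WithTop.recTopCoe with
    | top => exact (hO.2 hx).imp fun i hi => ⟨hi, le_top⟩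
    | coe j => exact ⟨j, hx, le_rfl⟩
  refine ⟨Ici (i : WithTop ι), ⟨isUpperSet_Ici _, fun _ => ⟨i, mem_Ici.2 le_rfl⟩⟩, hix,
    fun S hS hOS => ?_⟩
  obtain ⟨W, hWS, hiW⟩ := hOS hiO
  exact ⟨{W}, by simpa using hWS, fun y hy => ⟨W, by simp, (hS W hWS).1 hy hiW⟩⟩

end WithTop

section CoreCompactlyGenerated

variable {Y : Type u} [Preorder Y] [t : TopologicalSpace Y]

theorem ccgOpen.isOpen_preimage_recTopCoe (h : scott Y univ ≤ t) {V : Set Y} (hV : ccgOpen Y V)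
    {d : Set Y} [Nonempty d] [IsDirectedOrder d] {a : Y} (ha : IsLUB d a) :
    IsOpen[WithTop.limitTopology d] (WithTop.recTopCoe a Subtype.val ⁻¹' V) := by
  let _ := WithTop.limitTopology d
  let g : WithTop d → Y := WithTop.recTopCoe a Subtype.val
  have hg : Monotone g := by
    intro o o' hoo'
    cases o' using WithTop.recTopCoe with
    | top => cases o using WithTop.recTopCoe with
      | top => exact le_rfl
      | coe x => exact ha.1 x.2
    | coe y => cases o using WithTop.recTopCoe with
      | top => exact absurd hoo' (by simp)
      | coe x => exact (WithTop.coe_le_coe.1 hoo' : x ≤ y)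
  refine hV _ _ (WithTop.coreCompact_limitTopology d) g (continuous_def.2 fun W hW => ?_)
  obtain ⟨hWup, hWinacc⟩ := isOpen_scott_iff.1 (h W hW)
  refine ⟨hWup.preimage hg, fun haW => ?_⟩
  obtain ⟨x, hxd, hxW⟩ := hWinacc (nonempty_subtype.1 inferInstance)
    (directedOn_iff_isDirectedOrder.2 inferInstance) ha haW
  exact ⟨⟨x, hxd⟩, hxW⟩

theorem scott_le_ccgTopology (h : scott Y univ ≤ t) : scott Y univ ≤ ccgTopology Y := by
  intro V hV
  rw [isOpen_scott_iff]
  refine ⟨fun x y hxy hxV => ?_, fun d hne hdir a ha haV => ?_⟩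
  · have : Nonempty ({x, y} : Set Y) := (insert_nonempty x {y}).to_subtype
    have := directedOn_iff_isDirectedOrder.1 (directedOn_pair hxy)
    have hLUB : IsLUB {x, y} y := ⟨by simp [upperBounds, hxy], fun b hb => hb (by simp)⟩
    exact (ccgOpen.isOpen_preimage_recTopCoe h hV hLUB).1
      (WithTop.coe_le_coe.2 (show (⟨x, by simp⟩ : ({x, y} : Set Y)) ≤ ⟨y, by simp⟩ from hxy)) hxV
  · have := hne.to_subtype
    have := directedOn_iff_isDirectedOrder.1 hdir
    obtain ⟨x, hxV⟩ := (ccgOpen.isOpen_preimage_recTopCoe h hV ha).2 haV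
    exact ⟨x, x.2, hxV⟩

end CoreCompactlyGenerated

theorem isIrreducible_sUnion_of_directedOn {X : Type u} [TopologicalSpace X] {𝒮 : Set (Set X)}
    (hne : 𝒮.Nonempty) (hdir : DirectedOn (· ⊆ ·) 𝒮) (h𝒮 : ∀ s ∈ 𝒮, IsIrreducible s) :
    IsIrreducible (⋃₀ 𝒮) := by
  obtain ⟨s, hs⟩ := hne
  refine ⟨(h𝒮 s hs).nonempty.mono (subset_sUnion_of_mem hs), fun u v hu hv hsu hsv => ?_⟩
  obtain ⟨x, ⟨a, ha, hxa⟩, hxu⟩ := hsu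
  obtain ⟨y, ⟨b, hb, hyb⟩, hyv⟩ := hsv
  obtain ⟨c, hc, hac, hbc⟩ := hdir a ha b hb
  obtain ⟨z, hzc, hzuv⟩ := (h𝒮 c hc).2 u v hu hv ⟨x, hac hxa, hxu⟩ ⟨y, hbc hyb, hyv⟩
  exact ⟨z, subset_sUnion_of_mem hc hzc, hzuv⟩

theorem saturated_sInter {X : Type u} [TopologicalSpace X] {𝒰 : Set (Set X)}
    (h𝒰 : ∀ U ∈ 𝒰, IsOpen U) : Saturated (⋂₀ 𝒰) :=
  (subset_sInter fun _ hU => hU.2).antisymm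
    (sInter_subset_sInter fun U hU => ⟨h𝒰 U hU, sInter_subset_of_mem hU⟩)

/-- The points of the standard sobrification `X^s`. -/
abbrev IrrClosed (X : Type u) [TopologicalSpace X] := {A : Set X // IsIrreducible A ∧ IsClosed A}

namespace IrrClosed

variable {X : Type u} [TopologicalSpace X]

instance : TopologicalSpace (IrrClosed X) := hullTop _

/-- The basic open set `U^s`. -/
def hull (U : Set X) : Set (IrrClosed X) := {A | (A.1 ∩ U).Nonempty}

def ofPoint (x : X) : IrrClosed X :=
  ⟨closure {x}, isIrreducible_singleton.closure, isClosed_closure⟩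

theorem isOpen_hull {U : Set X} (hU : IsOpen U) : IsOpen (hull U) :=
  GenerateOpen.basic _ ⟨U, hU, rfl⟩

theorem hull_inter {U V : Set X} (hU : IsOpen U) (hV : IsOpen V) :
    hull (U ∩ V) = hull U ∩ hull V := by
  ext A
  refine ⟨fun ⟨x, hxA, hxU, hxV⟩ => ⟨⟨x, hxA, hxU⟩, ⟨x, hxA, hxV⟩⟩, fun ⟨hAU, hAV⟩ => ?_⟩
  exact A.2.1.2 U V hU hV hAU hAV

theorem hull_iUnion {ι : Sort*} (U : ι → Set X) : hull (⋃ i, U i) = ⋃ i, hull (U i) := by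
  ext A
  simp only [hull, mem_ofPred_eq, mem_iUnion, inter_iUnion, nonempty_iUnion]

theorem isUpperSet_hull (U : Set X) : IsUpperSet (hull U) :=
  fun _ _ hAB ⟨x, hxA, hxU⟩ => ⟨x, hAB hxA, hxU⟩

theorem isIrreducible_biUnion {𝒜 : Set (IrrClosed X)} (h𝒜 : IsIrreducible 𝒜) :
    IsIrreducible (⋃ A ∈ 𝒜, A.1) := by
  obtain ⟨A, hA⟩ := h𝒜.nonempty
  have meets {u : Set X} (h : ((⋃ A ∈ 𝒜, A.1) ∩ u).Nonempty) : (𝒜 ∩ hull u).Nonempty := by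
    obtain ⟨x, hx, hxu⟩ := h
    obtain ⟨A, hA, hxA⟩ := mem_iUnion₂.1 hx
    exact ⟨A, hA, x, hxA, hxu⟩
  refine ⟨A.2.1.nonempty.mono (subset_biUnion_of_mem hA), fun u v hu hv hsu hsv => ?_⟩
  obtain ⟨B, hB𝒜, hB⟩ := h𝒜.2 _ _ (isOpen_hull hu) (isOpen_hull hv) (meets hsu) (meets hsv)
  obtain ⟨x, hxB, hxuv⟩ := (hull_inter hu hv ▸ hB : B ∈ hull (u ∩ v))
  exact ⟨x, mem_biUnion hB𝒜 hxB, hxuv⟩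

theorem isLUB_closure_sUnion {𝒟 : Set (IrrClosed X)} (hne : 𝒟.Nonempty)
    (hdir : DirectedOn (· ≤ ·) 𝒟) :
    IsLUB 𝒟 ⟨closure (⋃₀ (Subtype.val '' 𝒟)),
      (isIrreducible_sUnion_of_directedOn (hne.image _) (directedOn_image.2 hdir)
        (forall_mem_image.2 fun A _ => A.2.1)).closure, isClosed_closure⟩ := by
  refine ⟨fun A hA => ?_, fun B hB => ?_⟩
  · exact (subset_sUnion_of_mem (mem_image_of_mem _ hA)).trans subset_closure
  · exact closure_minimal (sUnion_subset (forall_mem_image.2 hB)) B.2.2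

theorem dirSupInacc_hull {U : Set X} (hU : IsOpen U) : DirSupInacc (hull U) := by
  intro 𝒟 hne hdir S hS hSU
  rw [hS.unique (isLUB_closure_sUnion hne hdir), hull, mem_ofPred_eq,
    closure_inter_open_nonempty_iff hU] at hSU
  obtain ⟨x, ⟨_, ⟨A, hA, rfl⟩, hxA⟩, hxU⟩ := hSU
  exact ⟨A, hA, x, hxA, hxU⟩

theorem scott_le : scott (IrrClosed X) univ ≤ (inferInstance : TopologicalSpace (IrrClosed X)) :=
  le_generateFrom fun _ ⟨U, hU, h⟩ =>
    h ▸ isOpen_scott_iff.2 ⟨isUpperSet_hull U, dirSupInacc_hull hU⟩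

variable {C : Type u} [TopologicalSpace C] {ρ : C → IrrClosed X} {O : ℕ → Set C}

def seqKernel (ρ : C → IrrClosed X) (O : ℕ → Set C) : Set X :=
  ⋂₀ {U | IsOpen U ∧ ∃ n, O n ⊆ ρ ⁻¹' hull U}

/-- For the irreducible `F` of `exists_isIrreducible_disjoint_of_wayBelow`, the closure of
`⋃ e ∈ F, ρ e` is irreducible and misses `U`, yet by `hirr` it meets the kernel. -/
theorem exists_subset_preimage_hull_of_seqKernel_subset (hρ : Continuous ρ)
    (hO : ∀ n, IsOpen (O n)) (hOO : ∀ n, WayBelow (O (n + 1)) (O n))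
    (hirr : ∀ A : Set X, IsIrreducible A → IsClosed A → (∃ x, A = closure {x}) ∨ A = univ)
    (hK : (seqKernel ρ O).Nonempty) {U : Set X} (hU : IsOpen U) (hKU : seqKernel ρ O ⊆ U) :
    ∃ n, O n ⊆ ρ ⁻¹' hull U := by
  by_contra! h
  obtain ⟨F, hF, hFU, hFO⟩ :=
    exists_isIrreducible_disjoint_of_wayBelow hO hOO ((isOpen_hull hU).preimage hρ) h
  let A := closure (⋃ B ∈ ρ '' F, B.1)
  have hA : IsIrreducible A := (isIrreducible_biUnion (hF.image ρ hρ.continuousOn)).closure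
  have hAU : ¬(A ∩ U).Nonempty := by
    rw [closure_inter_open_nonempty_iff hU]
    rintro ⟨x, hx, hxU⟩
    obtain ⟨_, ⟨e, he, rfl⟩, hxe⟩ := mem_iUnion₂.1 hx
    exact disjoint_left.1 hFU he ⟨x, hxe, hxU⟩
  refine hAU (Nonempty.mono (inter_subset_inter_right _ hKU) ?_)
  rcases hirr A hA isClosed_closure with ⟨x, hx⟩ | hA
  · refine ⟨x, hx ▸ subset_closure rfl, mem_sInter.2 fun V ⟨hV, n, hnV⟩ => ?_⟩
    obtain ⟨e, heF, heO⟩ := hFO n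
    obtain ⟨y, hye, hyV⟩ := hnV heO
    have hyA : y ∈ A := subset_closure (mem_biUnion (mem_image_of_mem ρ heF) hye)
    rw [hx, ← specializes_iff_mem_closure] at hyA
    exact hyA.mem_open hV hyV
  · obtain ⟨k, hk⟩ := hK
    exact ⟨k, hA ▸ trivial, hk⟩

theorem isCompact_seqKernel (hρ : Continuous ρ) (hO : ∀ n, IsOpen (O n))
    (hOO : ∀ n, WayBelow (O (n + 1)) (O n))
    (hirr : ∀ A : Set X, IsIrreducible A → IsClosed A → (∃ x, A = closure {x}) ∨ A = univ)
    (hK : (seqKernel ρ O).Nonempty) : IsCompact (seqKernel ρ O) := by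
  refine isCompact_of_finite_subcover fun U hU hKU => ?_
  obtain ⟨n, hn⟩ := exists_subset_preimage_hull_of_seqKernel_subset hρ hO hOO hirr hK
    (isOpen_iUnion hU) hKU
  rw [hull_iUnion, preimage_iUnion] at hn
  obtain ⟨s, hs⟩ :=
    (hOO n).exists_finset_subset_iUnion (fun i => (isOpen_hull (hU i)).preimage hρ) hn
  refine ⟨s, sInter_subset_of_mem ⟨isOpen_biUnion fun i _ => hU i, n + 1, ?_⟩⟩
  simpa only [hull_iUnion, preimage_iUnion] using hs

theorem exists_compact_saturated_between (hcc : CoreCompact C) (hρ : Continuous ρ)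
    (hirr : ∀ A : Set X, IsIrreducible A → IsClosed A → (∃ x, A = closure {x}) ∨ A = univ)
    {c : C} (hc : ∀ W, IsOpen W → c ∈ W → ∃ c' ∈ W, ∃ x, (ρ c').1 = closure {x})
    {W : Set C} (hW : IsOpen W) (hcW : c ∈ W) :
    ∃ K : Set X, (K.Nonempty ∧ IsCompact K ∧ Saturated K ∧
        ∃ V, IsOpen V ∧ c ∈ V ∧ ∀ U, IsOpen U → K ⊆ U → V ⊆ ρ ⁻¹' hull U) ∧
      ∀ U, IsOpen U → W ⊆ ρ ⁻¹' hull U → K ⊆ U := by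
  obtain ⟨V, hV, hcV, hVW⟩ := hcc W hW c hcW
  obtain ⟨O, rfl, hO, hOO, hVO⟩ := exists_wayBelow_seq hcc hW hVW
  have hK : (seqKernel ρ O).Nonempty := by
    obtain ⟨c', hc'V, x, hx⟩ := hc V hV hcV
    refine ⟨x, mem_sInter.2 fun U ⟨hU, n, hnU⟩ => ?_⟩
    have hxU : ((ρ c').1 ∩ U).Nonempty := hnU (hVO n hc'V)
    rwa [hx, closure_inter_open_nonempty_iff hU, singleton_inter_nonempty] at hxU
  refine ⟨seqKernel ρ O, ⟨hK, isCompact_seqKernel hρ hO hOO hirr hK,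
    saturated_sInter fun U hU => hU.1, V, hV, hcV, fun U hU hKU => ?_⟩,
    fun U hU hWU => sInter_subset_of_mem ⟨hU, 0, hWU⟩⟩
  obtain ⟨n, hn⟩ := exists_subset_preimage_hull_of_seqKernel_subset hρ hO hOO hirr hK hU hKU
  exact (hVO n).trans hn

theorem isOpen_preimage_univ (hwf : WellFiltered X)
    (hirr : ∀ A : Set X, IsIrreducible A → IsClosed A → (∃ x, A = closure {x}) ∨ A = univ)
    (hnp : ∀ x : X, closure {x} ≠ univ) (huniv : IsIrreducible (univ : Set X))
    (hcc : CoreCompact C) (hρ : Continuous ρ) :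
    IsOpen (ρ ⁻¹' {⟨univ, huniv, isClosed_univ⟩}) := by
  refine isOpen_iff_forall_mem_open.2 fun c hc => ?_
  by_contra! hno
  have hc' (W : Set C) (hW : IsOpen W) (hcW : c ∈ W) : ∃ c' ∈ W, ∃ x, (ρ c').1 = closure {x} := by
    obtain ⟨c', hc'W, hc'T⟩ := not_subset.1 fun hWT => hno W hWT hW hcW
    exact ⟨c', hc'W, (hirr _ (ρ c').2.1 (ρ c').2.2).resolve_right fun h => hc'T (Subtype.ext h)⟩
  have hbetween (W : Set C) (hW : IsOpen W) (hcW : c ∈ W) :=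
    exists_compact_saturated_between hcc hρ hirr hc' hW hcW
  let 𝒦 : Set (Set X) := {K | K.Nonempty ∧ IsCompact K ∧ Saturated K ∧
    ∃ V, IsOpen V ∧ c ∈ V ∧ ∀ U, IsOpen U → K ⊆ U → V ⊆ ρ ⁻¹' hull U}
  have hfilt : ∀ K₁ ∈ 𝒦, ∀ K₂ ∈ 𝒦, ∃ K₃ ∈ 𝒦, K₃ ⊆ K₁ ∧ K₃ ⊆ K₂ := by
    rintro K₁ ⟨-, -, hsat₁, V₁, hV₁, hcV₁, hK₁⟩ K₂ ⟨-, -, hsat₂, V₂, hV₂, hcV₂, hK₂⟩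
    obtain ⟨K₃, hK₃, hK₃U⟩ := hbetween _ (hV₁.inter hV₂) ⟨hcV₁, hcV₂⟩
    refine ⟨K₃, hK₃, ?_, ?_⟩
    · rw [hsat₁]
      exact subset_sInter fun U ⟨hU, hKU⟩ => hK₃U U hU (inter_subset_left.trans (hK₁ U hU hKU))
    · rw [hsat₂]
      exact subset_sInter fun U ⟨hU, hKU⟩ => hK₃U U hU (inter_subset_right.trans (hK₂ U hU hKU))
  have hempty : ⋂₀ 𝒦 ⊆ ∅ := by
    intro z hz
    have hU : IsOpen (closure {z})ᶜ := isClosed_closure.isOpen_compl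
    have hcU : c ∈ ρ ⁻¹' hull (closure {z})ᶜ := by
      rw [mem_preimage, mem_singleton_iff.1 hc, hull, mem_ofPred_eq, univ_inter, nonempty_compl]
      exact hnp z
    obtain ⟨K, hK, hKU⟩ := hbetween _ ((isOpen_hull hU).preimage hρ) hcU
    exact hKU _ hU subset_rfl (mem_sInter.1 hz K hK) (subset_closure rfl)
  obtain ⟨K, hK, hKempty⟩ := hwf.2 𝒦 ((hbetween univ isOpen_univ trivial).imp fun _ h => h.1)
    (fun _ hK => ⟨hK.1, hK.2.1, hK.2.2.1⟩) hfilt ∅ isOpen_empty hempty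
  exact hK.1.ne_empty (subset_empty_iff.1 hKempty)

theorem ccgOpen_of_isUpperSet (hwf : WellFiltered X)
    (hirr : ∀ A : Set X, IsIrreducible A → IsClosed A → (∃ x, A = closure {x}) ∨ A = univ)
    (hnp : ∀ x : X, closure {x} ≠ univ) (huniv : IsIrreducible (univ : Set X))
    {V : Set (IrrClosed X)} (hV : IsUpperSet V) (hVX : IsOpen (ofPoint ⁻¹' V)) :
    ccgOpen (IrrClosed X) V := by
  intro C _ hcc ρ hρ
  let T : IrrClosed X := ⟨univ, huniv, isClosed_univ⟩
  have hsub : hull (ofPoint ⁻¹' V) ⊆ V := fun A ⟨x, hxA, hxV⟩ =>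
    hV (closure_minimal (singleton_subset_iff.2 hxA) A.2.2) hxV
  have hsup : V ⊆ hull (ofPoint ⁻¹' V) ∪ {T} := by
    intro A hA
    rcases hirr A.1 A.2.1 A.2.2 with ⟨x, hx⟩ | hAuniv
    · obtain rfl : A = ofPoint x := Subtype.ext hx
      exact Or.inl ⟨x, subset_closure rfl, hA⟩
    · exact Or.inr (Subtype.ext hAuniv)
  have hopen := (isOpen_hull hVX).preimage hρ
  by_cases hT : T ∈ V
  · rw [hsup.antisymm (union_subset hsub (singleton_subset_iff.2 hT)), preimage_union]
    exact hopen.union (isOpen_preimage_univ hwf hirr hnp huniv hcc hρ)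
  · rwa [← hsub.antisymm fun A hA => (hsup hA).resolve_right fun h => hT (h ▸ hA)]

end IrrClosed

theorem isScott_sigmaTop (P : Type u) [PartialOrder P] : @IsScott P univ _ (sigmaTop P) :=
  @IsScott.mk P univ _ (sigmaTop P) (scottTop_eq_scott P)

theorem IrrClosed.isOpen_preimage_ofPoint {P : Type u} [PartialOrder P] [TopologicalSpace P]
    [IsScott P univ] {V : Set (IrrClosed P)} (hV : IsOpen[scott (IrrClosed P) univ] V) :
    IsOpen (ofPoint ⁻¹' V) := by
  rw [isOpen_scott_iff] at hV
  have hmono : Monotone (ofPoint : P → IrrClosed P) := fun x y hxy =>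
    show closure {x} ⊆ closure {y} by
      simpa only [IsScott.closure_singleton] using Iic_subset_Iic.2 hxy
  rw [IsScott.isOpen_iff_isUpperSet_and_dirSupInaccOn (D := univ), dirSupInaccOn_univ]
  refine ⟨hV.1.preimage hmono, fun d hne hdir a ha haV => ?_⟩
  have hLUB : IsLUB (ofPoint '' d) (ofPoint a) := by
    refine ⟨hmono.mem_upperBounds_image ha.1, fun B hB => ?_⟩
    have hdB : d ⊆ B.1 := fun x hx => hB (mem_image_of_mem _ hx) (subset_closure rfl)
    exact closure_minimal (singleton_subset_iff.2
      (IsScott.dirSupClosed_of_isClosed B.2.2 hdB hne hdir ha)) B.2.2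
  obtain ⟨_, ⟨x, hx, rfl⟩, hxV⟩ :=
    hV.2 (hne.image _) (directedOn_image.2 (hdir.mono fun _ _ h => hmono h)) hLUB haV
  exact ⟨x, hx, hxV⟩

theorem exists_isIrreducible_isClosed_ne_closure_of_not_soberSpace {X : Type u}
    [TopologicalSpace X] [T0Space X] (h : ¬SoberSpace X) :
    ∃ A : Set X, IsIrreducible A ∧ IsClosed A ∧ ∀ x, A ≠ closure {x} := by
  by_contra! hA
  refine h ⟨inferInstance, fun A hA' hAc => ?_⟩
  obtain ⟨x, rfl⟩ := hA A hA' hAc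
  exact ⟨x, rfl, fun y hy => (inseparable_iff_closure_eq.2 hy.symm).eq⟩

theorem stmt4_general {P : Type u} [PartialOrder P]
    (hwf : @WellFiltered P (sigmaTop P))
    (hns : ¬ @SoberSpace P (sigmaTop P))
    (hirr : ∀ A : Set P, IrrCl P A → (∃ x : P, A = {y | y ≤ x}) ∨ A = Set.univ) :
    @ccgTopology (Sobrification P) (sobrTop P)
      = scottTop (fun A B : Sobrification P => (A : Set P) ⊆ (B : Set P)) := by
  let _ := sigmaTop P
  have := isScott_sigmaTop P
  have := hwf.1
  have hirr' (A : Set P) (hA : IsIrreducible A) (hAc : IsClosed A) :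
      (∃ x, A = closure {x}) ∨ A = univ := by
    simp only [IsScott.closure_singleton]
    exact hirr A ⟨hA, hAc⟩
  obtain ⟨A, hA, hAc, hAx⟩ := exists_isIrreducible_isClosed_ne_closure_of_not_soberSpace hns
  obtain rfl : A = univ := (hirr' A hA hAc).resolve_left fun ⟨x, hx⟩ => hAx x hx
  have hnp (x : P) : closure {x} ≠ univ := fun hx => hAx x hx.symm
  show ccgTopology (IrrClosed P) = scottTop (· ≤ ·)
  rw [scottTop_eq_scott]
  refine le_antisymm (fun V hV => ?_) (scott_le_ccgTopology IrrClosed.scott_le)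
  exact IrrClosed.ccgOpen_of_isUpperSet hwf hirr' hnp hA (isOpen_scott_iff.1 hV).1
    (IrrClosed.isOpen_preimage_ofPoint hV)

/-- if `P` is a well-filtered, non-sober dcpo whose Scott-irreducible closed
sets are exactly the principal lower sets together with `P`, then the core compactly
generated topology of the standard sobrification `P^s` of `ΣP` is the Scott topology of
`(IRR(P), ⊆)`. -/
theorem stmt4 {P : Type u} [PartialOrder P]
    (hdcpo : ∀ D : Set P, DirectedSubset (· ≤ · : P → P → Prop) D →
      ∃ s : P, IsSupWrt (· ≤ ·) D s)
    (hwf : @WellFiltered P (sigmaTop P))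
    (hns : ¬ @SoberSpace P (sigmaTop P))
    (hirr : ∀ A : Set P, IrrCl P A → (∃ x : P, A = {y | y ≤ x}) ∨ A = Set.univ) :
    @ccgTopology (Sobrification P) (sobrTop P)
      = scottTop (fun A B : Sobrification P => (A : Set P) ⊆ (B : Set P)) :=
  stmt4_general hwf hns hirr
end

section
/- The Scott space of the dcpo P = ℕ × ℕ × (ℕ ∪ {∞}), with order (i₁,j₁,m₁) ≤ (i₂,j₂,m₂) iff (i₁=i₂, j₁=j₂, m₁ ≤ m₂ ≤ ∞) or (i₂ = i₁+1, m₁ ≤ j₂, m₂ = ∞), is well-filtered but not sober, and its irreducible closed subsets are exactly the principal lower sets ↓x together with P itself. -/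
open Set TopologicalSpace

universe u

/-- Jia's dcpo: `ℕ × ℕ × (ℕ ∪ {∞})`. -/
def JiaP : Type := ℕ × ℕ × ℕ∞

/-- The order on Jia's dcpo. -/
def JiaLE (a b : JiaP) : Prop :=
  (a.1 = b.1 ∧ a.2.1 = b.2.1 ∧ a.2.2 ≤ b.2.2) ∨
    (b.1 = a.1 + 1 ∧ a.2.2 ≤ (b.2.1 : ℕ∞) ∧ b.2.2 = ⊤)

/-- The Scott topology on Jia's dcpo. -/
def JiaTop : TopologicalSpace JiaP := scottTop JiaLE

/-- Irreducible closed subsets of Jia's Scott space. -/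
def JiaIrrCl (A : Set JiaP) : Prop :=
  @IsIrreducible JiaP JiaTop A ∧ @IsClosed JiaP JiaTop A

/-- The standard sobrification of Jia's Scott space. -/
def JiaSob := {A : Set JiaP // JiaIrrCl A}

/-- The hull-kernel topology on the sobrification of Jia's Scott space. -/
def JiaSobTop : TopologicalSpace JiaSob := @hullTop JiaP JiaTop JiaIrrCl

/-! A Scott-open set containing a top point `(p, q, ⊤)` contains some `(p, q, n)`, hence every
`(p + 1, k, ⊤)` with `k ≥ n`; so any two nonempty open sets meet far up, and `P` is irreducible
without being some `↓x`. An irreducible closed set `A` without a largest element reaches arbitrarily high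
levels, and irreducibility against open sets whose points have fast-growing chain indices forces
infinitely many top points in `A` on unboundedly many levels; infinitely many tops on level `p + 1`
put all of level `p` into `A`, so `A = P`. For well-filteredness, a topological Rudin lemma yields
an irreducible closed set meeting every `K \ U`; compact sets have bounded levels, so this set is
bounded, hence equal to some `↓x`, and `x` lies in every `K` but not in `U`. -/

open Topology

section ScottTopology

variable {X : Type u} {le : X → X → Prop}

lemma isUpperSetWrt_of_isOpen_scottTop {U : Set X} (hU : IsOpen[scottTop le] U) :
    IsUpperSetWrt le U :=
  hU.1

lemma mem_of_le_of_isClosed_scottTop {A : Set X} (hA : IsClosed[scottTop le] A) {x y : X}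
    (hx : x ∈ A) (hyx : le y x) : y ∈ A :=
  by_contra fun hy => isUpperSetWrt_of_isOpen_scottTop hA.isOpen_compl hy hyx hx

lemma mem_of_isSupWrt_of_isClosed_scottTop {A D : Set X} (hA : IsClosed[scottTop le] A)
    (hD : DirectedSubset le D) (hDA : D ⊆ A) {s : X} (hs : IsSupWrt le D s) : s ∈ A := by
  by_contra hsA
  obtain ⟨d, hdD, hdA⟩ := hA.isOpen_compl.2 D hD s hs hsA
  exact hdA (hDA hdD)

lemma isClosed_downSet_scottTop (htrans : ∀ a b c, le a b → le b c → le a c) (x : X) :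
    IsClosed[scottTop le] {y | le y x} := by
  let _ : TopologicalSpace X := scottTop le
  refine ⟨⟨fun a ha b hab hb => ha (htrans a b x hab hb), fun D hD s hs hsx => ?_⟩⟩
  by_contra! hDx
  exact hsx (hs.2 x fun d hd => by_contra fun h => hDx.subset ⟨hd, h⟩)

lemma isUpperSetWrt_of_saturated {K : Set X} (hK : @Saturated X (scottTop le) K) :
    IsUpperSetWrt le K := by
  intro x hx y hxy
  rw [hK]
  exact fun U hU => isUpperSetWrt_of_isOpen_scottTop hU.1 (hU.2 hx) hxy

end ScottTopology

section FilteredCompact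

variable {X : Type*} [TopologicalSpace X] {ℱ : Set (Set X)}

lemma exists_minimal_isClosed_forall_inter_nonempty (hcpt : ∀ F ∈ ℱ, IsCompact F)
    (hne : ∀ F ∈ ℱ, F.Nonempty) :
    ∃ A, Minimal (fun C => IsClosed C ∧ ∀ F ∈ ℱ, (C ∩ F).Nonempty) A := by
  refine zorn_superset _ fun c hc hchain => ?_
  set c' : Set (Set X) := insert univ c
  refine ⟨⋂₀ c', ⟨isClosed_sInter fun C hC => ?_, fun F hF => ?_⟩,
    fun C hC => sInter_subset_of_mem (mem_insert_of_mem _ hC)⟩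
  · rcases hC with rfl | hC
    exacts [isClosed_univ, (hc hC).1]
  have hchain' : IsChain (· ⊇ ·) c' := (hchain.insert fun C _ _ => Or.inr (subset_univ C)).symm
  have hdir : Directed (· ⊇ ·) ((↑) : c' → Set X) := directedOn_iff_directed.1 hchain'.directedOn
  have : Nonempty c' := ⟨⟨univ, mem_insert _ _⟩⟩
  rw [sInter_eq_iInter, inter_comm]
  refine (hcpt F hF).inter_iInter_nonempty _ (fun C => ?_) fun u => ?_
  · rcases C.2 with hC | hC
    exacts [hC ▸ isClosed_univ, (hc hC).1]
  obtain ⟨C, hCu⟩ := hdir.finset_le u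
  have hCF : (F ∩ C).Nonempty := by
    rcases C.2 with hC | hC
    · simpa [hC] using hne F hF
    · exact inter_comm F C ▸ (hc hC).2 F hF
  exact hCF.mono (inter_subset_inter_right _ (subset_iInter₂ hCu))

variable {A : Set X}

lemma Minimal.isPreirreducible_of_directedOn
    (hA : Minimal (fun C => IsClosed C ∧ ∀ F ∈ ℱ, (C ∩ F).Nonempty) A)
    (hdir : DirectedOn (· ⊇ ·) ℱ) : IsPreirreducible A := by
  have hmiss : ∀ V, IsOpen V → (A ∩ V).Nonempty → ∃ F ∈ ℱ, A ∩ F ⊆ V := by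
    rintro V hV ⟨y, hyA, hyV⟩
    by_contra! h
    have hsub : A ⊆ A \ V := hA.2 ⟨hA.1.1.sdiff hV, fun F hF => ?_⟩ sdiff_subset
    · exact (hsub hyA).2 hyV
    obtain ⟨x, ⟨hxA, hxF⟩, hxV⟩ := not_subset.1 (h F hF)
    exact ⟨x, ⟨hxA, hxV⟩, hxF⟩
  intro V₁ V₂ hV₁ hV₂ hA₁ hA₂
  obtain ⟨F₁, hF₁, h₁⟩ := hmiss V₁ hV₁ hA₁
  obtain ⟨F₂, hF₂, h₂⟩ := hmiss V₂ hV₂ hA₂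
  obtain ⟨F, hF, hF₁F, hF₂F⟩ := hdir F₁ hF₁ F₂ hF₂
  obtain ⟨x, hxA, hxF⟩ := hA.1.2 F hF
  exact ⟨x, hxA, h₁ ⟨hxA, hF₁F hxF⟩, h₂ ⟨hxA, hF₂F hxF⟩⟩

lemma Minimal.eq_closure_inter_of_directedOn
    (hA : Minimal (fun C => IsClosed C ∧ ∀ F ∈ ℱ, (C ∩ F).Nonempty) A)
    (hdir : DirectedOn (· ⊇ ·) ℱ) {F : Set X} (hF : F ∈ ℱ) : A = closure (A ∩ F) := by
  have hsub : closure (A ∩ F) ⊆ A := hA.1.1.closure_subset_iff.2 inter_subset_left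
  refine (hA.2 ⟨isClosed_closure, fun F' hF' => ?_⟩ hsub).antisymm hsub
  obtain ⟨G, hG, hGF, hGF'⟩ := hdir F hF F' hF'
  obtain ⟨x, hxA, hxG⟩ := hA.1.2 G hG
  exact ⟨x, subset_closure ⟨hxA, hGF hxG⟩, hGF' hxG⟩

theorem exists_isIrreducible_isClosed_eq_closure_inter (hℱ : ℱ.Nonempty)
    (hcpt : ∀ F ∈ ℱ, IsCompact F) (hne : ∀ F ∈ ℱ, F.Nonempty) (hdir : DirectedOn (· ⊇ ·) ℱ) :
    ∃ A, IsIrreducible A ∧ IsClosed A ∧ ∀ F ∈ ℱ, A = closure (A ∩ F) := by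
  obtain ⟨A, hA⟩ := exists_minimal_isClosed_forall_inter_nonempty hcpt hne
  obtain ⟨F, hF⟩ := hℱ
  exact ⟨A, ⟨(hA.1.2 F hF).mono inter_subset_left, hA.isPreirreducible_of_directedOn hdir⟩,
    hA.1.1, fun _ => hA.eq_closure_inter_of_directedOn hdir⟩

end FilteredCompact

namespace JiaLE

variable {a b c : JiaP}

lemma refl (a : JiaP) : JiaLE a a := Or.inl ⟨rfl, rfl, le_rfl⟩

lemma trans (hab : JiaLE a b) (hbc : JiaLE b c) : JiaLE a c := by
  rcases hab with ⟨h₁, h₂, h₃⟩ | ⟨h₁, h₂, h₃⟩ <;> rcases hbc with ⟨g₁, g₂, g₃⟩ | ⟨g₁, g₂, g₃⟩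
  · exact Or.inl ⟨h₁.trans g₁, h₂.trans g₂, h₃.trans g₃⟩
  · exact Or.inr ⟨by omega, h₃.trans g₂, g₃⟩
  · exact Or.inr ⟨by omega, g₂ ▸ h₂, top_le_iff.1 (h₃ ▸ g₃)⟩
  · exact absurd (top_le_iff.1 (h₃ ▸ g₂)) (ENat.natCast_ne_top _)

lemma antisymm (hab : JiaLE a b) (hba : JiaLE b a) : a = b := by
  rcases hab with ⟨h₁, h₂, h₃⟩ | ⟨h₁, -, -⟩ <;> rcases hba with ⟨g₁, -, g₃⟩ | ⟨g₁, -, -⟩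
  · exact Prod.ext h₁ (Prod.ext h₂ (h₃.antisymm g₃))
  all_goals omega

lemma fst_le (hab : JiaLE a b) : a.1 ≤ b.1 := by
  rcases hab with ⟨h, -, -⟩ | ⟨h, -, -⟩ <;> omega

lemma eq_of_snd_snd_eq_top (hab : JiaLE a b) (ha : a.2.2 = ⊤) : b = a := by
  rcases hab with ⟨h₁, h₂, h₃⟩ | ⟨-, h₂, -⟩
  · exact Prod.ext h₁.symm (Prod.ext h₂.symm (ha ▸ top_le_iff.1 (ha ▸ h₃)))
  · exact absurd (top_le_iff.1 (ha ▸ h₂)) (ENat.natCast_ne_top _)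

end JiaLE

attribute [local instance] JiaTop

namespace JiaP

open Filter

def sameChain (y : JiaP) : Set JiaP := {z | z.1 = y.1 ∧ z.2.1 = y.2.1}

lemma directedSubset_of_subset_sameChain {D : Set JiaP} {y : JiaP} (hne : D.Nonempty)
    (hD : D ⊆ sameChain y) : DirectedSubset JiaLE D := by
  refine ⟨hne, fun a ha b hb => ?_⟩
  have hab : a.1 = b.1 ∧ a.2.1 = b.2.1 :=
    ⟨(hD ha).1.trans (hD hb).1.symm, (hD ha).2.trans (hD hb).2.symm⟩
  rcases le_total a.2.2 b.2.2 with h | h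
  · exact ⟨b, hb, Or.inl ⟨hab.1, hab.2, h⟩, JiaLE.refl b⟩
  · exact ⟨a, ha, JiaLE.refl a, Or.inl ⟨hab.1.symm, hab.2.symm, h⟩⟩

lemma isSupWrt_of_subset_sameChain {D : Set JiaP} {y : JiaP} (hne : D.Nonempty)
    (hD : D ⊆ sameChain y) :
    IsSupWrt JiaLE D ((y.1, y.2.1, sSup ((fun d : JiaP => d.2.2) '' D)) : JiaP) := by
  refine ⟨fun d hd => Or.inl ⟨(hD hd).1, (hD hd).2, le_sSup (mem_image_of_mem _ hd)⟩,
    fun t ht => ?_⟩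
  obtain ⟨d₀, hd₀⟩ := hne
  rcases ht d₀ hd₀ with ⟨h₁, h₂, -⟩ | ⟨h₁, -, h₃⟩
  · refine Or.inl ⟨(hD hd₀).1.symm.trans h₁, (hD hd₀).2.symm.trans h₂, sSup_le ?_⟩
    rintro _ ⟨d, hd, rfl⟩
    rcases ht d hd with ⟨-, -, g₃⟩ | ⟨g₁, -, -⟩
    · exact g₃
    · have := (hD hd).1; have := (hD hd₀).1; omega
  · refine Or.inr ⟨by rw [h₁, (hD hd₀).1], sSup_le ?_, h₃⟩
    rintro _ ⟨d, hd, rfl⟩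
    rcases ht d hd with ⟨g₁, -, -⟩ | ⟨-, g₂, -⟩
    · have := (hD hd).1; have := (hD hd₀).1; omega
    · exact g₂

lemma isSupWrt_unique {D : Set JiaP} {s t : JiaP} (hs : IsSupWrt JiaLE D s)
    (ht : IsSupWrt JiaLE D t) : s = t :=
  (hs.2 t ht.1).antisymm (ht.2 s hs.1)

/-- Two points of different chains lie below a common point only if it has height `⊤`, and
such points are maximal. -/
lemma directedSubset_cases {D : Set JiaP} (hD : DirectedSubset JiaLE D) :
    (∃ c ∈ D, IsUBWrt JiaLE D c) ∨ ∃ y, D ⊆ sameChain y := by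
  obtain ⟨d₀, hd₀⟩ := hD.1
  by_cases hchain : D ⊆ sameChain d₀
  · exact Or.inr ⟨d₀, hchain⟩
  obtain ⟨a, ha, hna⟩ := not_subset.1 hchain
  obtain ⟨c, hc, hac, hd₀c⟩ := hD.2 a ha d₀ hd₀
  have hctop : c.2.2 = ⊤ := by
    rcases hac with ⟨h₁, h₂, -⟩ | ⟨-, -, h₃⟩
    · rcases hd₀c with ⟨g₁, g₂, -⟩ | ⟨-, -, g₃⟩
      · exact absurd ⟨h₁.trans g₁.symm, h₂.trans g₂.symm⟩ hna
      · exact g₃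
    · exact h₃
  refine Or.inl ⟨c, hc, fun d hd => ?_⟩
  obtain ⟨e, -, hde, hce⟩ := hD.2 d hd c hc
  exact hce.eq_of_snd_snd_eq_top hctop ▸ hde

theorem exists_isSupWrt {D : Set JiaP} (hD : DirectedSubset JiaLE D) :
    ∃ s, IsSupWrt JiaLE D s := by
  rcases directedSubset_cases hD with ⟨c, hc, hub⟩ | ⟨y, hy⟩
  · exact ⟨c, hub, fun t ht => ht c hc⟩
  · exact ⟨_, isSupWrt_of_subset_sameChain hD.1 hy⟩

theorem isOpen_iff {U : Set JiaP} :
    IsOpen U ↔ IsUpperSetWrt JiaLE U ∧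
      ∀ p q : ℕ, ((p, q, ⊤) : JiaP) ∈ U → ∃ n : ℕ, ((p, q, n) : JiaP) ∈ U := by
  refine ⟨fun hU => ⟨hU.1, fun p q htop => ?_⟩, fun ⟨hup, htop⟩ => ⟨hup, ?_⟩⟩
  · set D : Set JiaP := range fun n : ℕ => ((p, q, n) : JiaP)
    have hD : D ⊆ sameChain (p, q, 0) := by rintro _ ⟨n, rfl⟩; constructor <;> rfl
    have hsup := isSupWrt_of_subset_sameChain (range_nonempty _) hD
    have hsup_top : sSup ((fun d : JiaP => d.2.2) '' D) = ⊤ :=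
      ENat.eq_top_iff_forall_ge.2 fun n => le_sSup ⟨_, mem_range_self n, rfl⟩
    rw [hsup_top] at hsup
    obtain ⟨_, ⟨n, rfl⟩, hn⟩ := hU.2 D (directedSubset_of_subset_sameChain (range_nonempty _) hD)
      _ hsup htop
    exact ⟨n, hn⟩
  intro D hD s hs hsU
  rcases directedSubset_cases hD with ⟨c, hc, hub⟩ | ⟨y, hy⟩
  · exact ⟨c, hc, isSupWrt_unique hs ⟨hub, fun t ht => ht c hc⟩ ▸ hsU⟩
  rw [isSupWrt_unique hs (isSupWrt_of_subset_sameChain hD.1 hy)] at hsU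
  set H := (fun d : JiaP => d.2.2) '' D
  by_cases hH : sSup H = ⊤
  · rw [hH] at hsU
    obtain ⟨n, hn⟩ := htop _ _ hsU
    obtain ⟨_, ⟨d, hd, rfl⟩, hnd⟩ := lt_sSup_iff.1 (hH ▸ ENat.natCast_lt_top n)
    exact ⟨d, hd, hup hn (Or.inl ⟨(hy hd).1.symm, (hy hd).2.symm, hnd.le⟩)⟩
  · have : Nonempty H := (hD.1.image _).to_subtype
    obtain ⟨d, hd, hdH⟩ := ENat.sSup_mem_of_nonempty_of_lt_top (lt_top_iff_ne_top.2 hH)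
    refine ⟨d, hd, ?_⟩
    have hds : d = (y.1, y.2.1, sSup H) := Prod.ext (hy hd).1 (Prod.ext (hy hd).2 hdH)
    exact hds ▸ hsU

lemma top_mem_of_isClosed {A : Set JiaP} (hA : IsClosed A) {p q : ℕ}
    (h : ∀ n : ℕ, ((p, q, n) : JiaP) ∈ A) : ((p, q, ⊤) : JiaP) ∈ A := by
  by_contra ht
  obtain ⟨n, hn⟩ := (isOpen_iff.1 hA.isOpen_compl).2 p q ht
  exact hn (h n)

lemma isClosed_downSet (x : JiaP) : IsClosed {y | JiaLE y x} :=
  isClosed_downSet_scottTop (le := JiaLE) (fun _ _ _ => JiaLE.trans) x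

lemma closure_singleton (x : JiaP) : closure {x} = {y | JiaLE y x} :=
  Subset.antisymm (closure_minimal (singleton_subset_iff.2 (JiaLE.refl x)) (isClosed_downSet x))
    fun _ hy => mem_of_le_of_isClosed_scottTop isClosed_closure (subset_closure rfl) hy

lemma t0Space : T0Space JiaP :=
  (t0Space_iff_inseparable JiaP).2 fun x y hxy => by
    have h := inseparable_iff_closure_eq.1 hxy
    rw [closure_singleton, closure_singleton] at h
    exact JiaLE.antisymm (h.subset (JiaLE.refl x)) (h.symm.subset (JiaLE.refl y))

def levelGE (k : ℕ) : Set JiaP := {z | k ≤ z.1}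

lemma isOpen_levelGE (k : ℕ) : IsOpen (levelGE k) :=
  isOpen_iff.2 ⟨fun _ hz _ hzw => le_trans hz hzw.fst_le, fun _ _ h => ⟨0, h⟩⟩

lemma isOpen_sameChain_union {y : JiaP} {V : Set JiaP} (hV : IsOpen V)
    (htop : ∀ z : JiaP, z.1 = y.1 + 1 → z.2.2 = ⊤ → z ∈ V) : IsOpen (sameChain y ∪ V) := by
  obtain ⟨hVup, hVtop⟩ := isOpen_iff.1 hV
  refine isOpen_iff.2 ⟨?_, fun p q => ?_⟩
  · rintro z (⟨hz₁, hz₂⟩ | hz) w hzw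
    · rcases hzw with ⟨h₁, h₂, -⟩ | ⟨h₁, -, h₃⟩
      · exact Or.inl ⟨h₁.symm.trans hz₁, h₂.symm.trans hz₂⟩
      · exact Or.inr (htop w (by omega) h₃)
    · exact Or.inr (hVup hz hzw)
  · rintro (hpq | hpq)
    · exact ⟨0, Or.inl hpq⟩
    · obtain ⟨n, hn⟩ := hVtop p q hpq
      exact ⟨n, Or.inr hn⟩

def growthSet (h : ℕ → ℕ) (k : ℕ) : Set JiaP :=
  {z | k ≤ z.1 ∧ (k < z.1 → h z.1 ≤ z.2.1) ∧ (h (z.1 + 1) : ℕ∞) ≤ z.2.2}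

lemma isOpen_growthSet (h : ℕ → ℕ) (k : ℕ) : IsOpen (growthSet h k) := by
  refine isOpen_iff.2 ⟨?_, fun p q hpq => ⟨h (p + 1), hpq.1, hpq.2.1, le_rfl⟩⟩
  rintro z ⟨hk, hidx, hht⟩ w (⟨h₁, h₂, h₃⟩ | ⟨h₁, h₂, h₃⟩)
  · exact ⟨h₁ ▸ hk, h₁ ▸ h₂ ▸ hidx, h₁ ▸ hht.trans h₃⟩
  · refine ⟨by omega, fun _ => ?_, h₃ ▸ le_top⟩
    rw [h₁]
    exact_mod_cast hht.trans h₂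

lemma mem_growthSet_of_snd_snd_eq_top (h : ℕ → ℕ) {k : ℕ} {z : JiaP} (hz : z.1 = k)
    (hztop : z.2.2 = ⊤) : z ∈ growthSet h k :=
  ⟨hz.ge, fun hlt => absurd hz hlt.ne', hztop ▸ le_top⟩

def topOf (z : JiaP) : JiaP := (z.1, z.2.1, ⊤)

lemma topOf_eq_self {z : JiaP} (hz : z.2.2 = ⊤) : topOf z = z :=
  Prod.ext rfl (Prod.ext rfl hz.symm)

lemma isOpen_setOf_mem_imp_topOf_mem {A : Set JiaP} (hA : IsClosed A) :
    IsOpen {z | z ∈ A → topOf z ∈ A} := by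
  refine isOpen_iff.2 ⟨fun z hz w hzw hwA => ?_, fun p q _ => ?_⟩
  · rcases hzw with hzw | ⟨-, -, h₃⟩
    · have hzw' : topOf w = topOf z := Prod.ext hzw.1.symm (Prod.ext hzw.2.1.symm rfl)
      exact hzw' ▸ hz (mem_of_le_of_isClosed_scottTop hA hwA (Or.inl hzw))
    · exact (topOf_eq_self h₃).symm ▸ hwA
  · by_cases ht : ((p, q, ⊤) : JiaP) ∈ A
    · exact ⟨0, fun _ => ht⟩
    · obtain ⟨n, hn⟩ := not_forall.1 (mt (top_mem_of_isClosed hA) ht)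
      exact ⟨n, fun h => absurd h hn⟩

lemma exists_greatest_inter_sameChain {A : Set JiaP} (hA : IsClosed A) {c : JiaP} (hc : c ∈ A) :
    ∃ a ∈ A ∩ sameChain c, ∀ y ∈ A ∩ sameChain c, JiaLE y a := by
  have hne : (A ∩ sameChain c).Nonempty := ⟨c, hc, rfl, rfl⟩
  have hsup := isSupWrt_of_subset_sameChain hne inter_subset_right
  exact ⟨_, ⟨mem_of_isSupWrt_of_isClosed_scottTop hA
    (directedSubset_of_subset_sameChain hne inter_subset_right) inter_subset_left hsup,
    rfl, rfl⟩, hsup.1⟩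

/-- Irreducibility against `sameChain a ∪ levelGE (a.1 + 1)` and `(↓a)ᶜ`, for `a` the largest
point of `A` on the chain of `c`. -/
lemma exists_mem_fst_lt {A : Set JiaP} (hirr : IsPreirreducible A) (hA : IsClosed A)
    (hA_top : ∀ x ∈ A, ∃ y ∈ A, ¬ JiaLE y x) {c : JiaP} (hc : c ∈ A) :
    ∃ c' ∈ A, c.1 < c'.1 := by
  obtain ⟨a, ⟨haA, hac⟩, hmax⟩ := exists_greatest_inter_sameChain hA hc
  obtain ⟨b, hbA, hba⟩ := hA_top a haA
  have hO : IsOpen (sameChain a ∪ levelGE (a.1 + 1)) :=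
    isOpen_sameChain_union (isOpen_levelGE _) fun z hz _ => hz.ge
  obtain ⟨c', hc'A, hc'a | hc'lev, hc'b⟩ := hirr _ _ hO (isClosed_downSet a).isOpen_compl
    ⟨a, haA, Or.inl ⟨rfl, rfl⟩⟩ ⟨b, hbA, hba⟩
  · exact absurd (hmax c' ⟨hc'A, hc'a.1.trans hac.1, hc'a.2.trans hac.2⟩) hc'b
  · have : a.1 + 1 ≤ c'.1 := hc'lev
    exact ⟨c', hc'A, by rw [← hac.1]; omega⟩

def tops (A : Set JiaP) (p : ℕ) : Set ℕ := {q | ((p, q, ⊤) : JiaP) ∈ A}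

lemma mem_of_infinite_tops {A : Set JiaP} (hA : IsClosed A) {p : ℕ}
    (hinf : (tops A (p + 1)).Infinite) (q : ℕ) (m : ℕ∞) : ((p, q, m) : JiaP) ∈ A := by
  have hfin : ∀ n : ℕ, ((p, q, n) : JiaP) ∈ A := fun n => by
    obtain ⟨k, hk, hnk⟩ := hinf.exists_gt n
    exact mem_of_le_of_isClosed_scottTop hA hk (Or.inr ⟨rfl, Nat.cast_le.2 hnk.le, rfl⟩)
  induction m using ENat.recTopCoe with
  | top => exact top_mem_of_isClosed hA hfin
  | coe n => exact hfin n

lemma infinite_tops_of_le {A : Set JiaP} (hA : IsClosed A) {k p : ℕ}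
    (hinf : (tops A p).Infinite) (hkp : k ≤ p) : (tops A k).Infinite := by
  obtain ⟨d, rfl⟩ := Nat.exists_eq_add_of_le hkp
  induction d with
  | zero => exact hinf
  | succ d ih =>
    have : tops A (k + d) = univ := eq_univ_of_forall fun q => mem_of_infinite_tops hA hinf q ⊤
    exact ih (this ▸ infinite_univ) (Nat.le_add_right k d)

lemma eq_univ_of_infinite_tops {A : Set JiaP} (hA : IsClosed A)
    (h : ∀ L, ∃ p, L ≤ p ∧ (tops A p).Infinite) : A = univ :=
  eq_univ_of_forall fun z => by
    obtain ⟨p, hp, hinf⟩ := h (z.1 + 1)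
    exact mem_of_infinite_tops hA (infinite_tops_of_le hA hinf hp) z.2.1 z.2.2

/-- Otherwise, with `h p` bounding the tops of `A` on each level `p ≥ L`, `A` meets the open set
`sameChain a ∪ (growthSet h (a.1 + 1) ∩ {z | z ∈ A → topOf z ∈ A})` (at `a`) and a high
`levelGE`, but not their intersection. -/
lemma exists_infinite_tops {A : Set JiaP} (hirr : IsPreirreducible A) (hA : IsClosed A)
    (hlev : ∀ L, ∃ c ∈ A, L ≤ c.1) (L : ℕ) : ∃ p, L ≤ p ∧ (tops A p).Infinite := by
  by_contra! hfin
  have hbound : ∀ p, ∃ b, L ≤ p → ∀ q ∈ tops A p, q < b := fun p => by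
    by_cases hp : L ≤ p
    · obtain ⟨b, hb⟩ := (hfin p hp).bddAbove
      exact ⟨b + 1, fun _ q hq => Nat.lt_succ_of_le (hb hq)⟩
    · exact ⟨0, fun h => absurd h hp⟩
  choose h hh using hbound
  obtain ⟨a, haA, -⟩ := hlev 0
  obtain ⟨c, hcA, hc⟩ := hlev (max L (a.1 + 2))
  have hO : IsOpen (sameChain a ∪ (growthSet h (a.1 + 1) ∩ {z | z ∈ A → topOf z ∈ A})) :=
    isOpen_sameChain_union ((isOpen_growthSet h _).inter (isOpen_setOf_mem_imp_topOf_mem hA))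
      fun z hz hztop => ⟨mem_growthSet_of_snd_snd_eq_top h hz hztop,
        fun hzA => (topOf_eq_self hztop).symm ▸ hzA⟩
  obtain ⟨x, hxA, hxO, hxc⟩ := hirr _ _ hO (isOpen_levelGE _) ⟨a, haA, Or.inl ⟨rfl, rfl⟩⟩
    ⟨c, hcA, hc⟩
  have hx : max L (a.1 + 2) ≤ x.1 := hxc
  rcases hxO with ⟨hxa, -⟩ | ⟨⟨-, hidx, -⟩, hxtop⟩
  · omega
  · have h₁ := hidx (by omega)
    have h₂ := hh x.1 (by omega) x.2.1 (hxtop hxA)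
    omega

theorem eq_downSet_or_eq_univ {A : Set JiaP} (hirr : IsIrreducible A) (hA : IsClosed A) :
    (∃ x, A = {y | JiaLE y x}) ∨ A = univ := by
  by_cases hmax : ∃ x ∈ A, ∀ y ∈ A, JiaLE y x
  · obtain ⟨x, hxA, hx⟩ := hmax
    exact Or.inl ⟨x, Subset.antisymm hx fun y hy => mem_of_le_of_isClosed_scottTop hA hxA hy⟩
  push Not at hmax
  have hlev : ∀ L, ∃ c ∈ A, L ≤ c.1 := by
    intro L
    induction L with
    | zero =>
      obtain ⟨c, hc⟩ := hirr.nonempty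
      exact ⟨c, hc, Nat.zero_le _⟩
    | succ L ih =>
      obtain ⟨c, hcA, hc⟩ := ih
      obtain ⟨c', hc'A, hcc'⟩ := exists_mem_fst_lt hirr.2 hA hmax hcA
      exact ⟨c', hc'A, by omega⟩
  exact Or.inr (eq_univ_of_infinite_tops hA (exists_infinite_tops hirr.2 hA hlev))

lemma eventually_top_mem_succ {U : Set JiaP} (hU : IsOpen U) {p q : ℕ}
    (h : ((p, q, ⊤) : JiaP) ∈ U) : ∀ᶠ k in atTop, ((p + 1, k, ⊤) : JiaP) ∈ U := by
  obtain ⟨hup, htop⟩ := isOpen_iff.1 hU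
  obtain ⟨n, hn⟩ := htop p q h
  exact eventually_atTop.2 ⟨n, fun k hk => hup hn (Or.inr ⟨rfl, Nat.cast_le.2 hk, rfl⟩)⟩

lemma eventually_top_mem_of_lt {U : Set JiaP} (hU : IsOpen U) {p q r : ℕ}
    (h : ((p, q, ⊤) : JiaP) ∈ U) (hpr : p < r) : ∀ᶠ k in atTop, ((r, k, ⊤) : JiaP) ∈ U := by
  induction r, hpr using Nat.le_induction with
  | base => exact eventually_top_mem_succ hU h
  | succ r _ ih =>
    obtain ⟨k, hk⟩ := ih.exists
    exact eventually_top_mem_succ hU hk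

theorem isIrreducible_univ : IsIrreducible (univ : Set JiaP) := by
  refine ⟨⟨(0, 0, 0), trivial⟩, ?_⟩
  rintro U V hU hV ⟨x, -, hx⟩ ⟨y, -, hy⟩
  have hxU : ((x.1, x.2.1, ⊤) : JiaP) ∈ U := (isOpen_iff.1 hU).1 hx (Or.inl ⟨rfl, rfl, le_top⟩)
  have hyV : ((y.1, y.2.1, ⊤) : JiaP) ∈ V := (isOpen_iff.1 hV).1 hy (Or.inl ⟨rfl, rfl, le_top⟩)
  obtain ⟨k, hkU, hkV⟩ :=
    ((eventually_top_mem_of_lt hU hxU (Nat.lt_succ_of_le (le_max_left x.1 y.1))).and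
      (eventually_top_mem_of_lt hV hyV (Nat.lt_succ_of_le (le_max_right x.1 y.1)))).exists
  exact ⟨_, trivial, hkU, hkV⟩

/-- Cover `F` by the open sets `sameChain y ∪ growthSet h (y.1 + 1)`, where `h` outgrows the
chain indices of points of `F` at unboundedly high levels. -/
theorem exists_fst_le_of_isCompact {F : Set JiaP} (hF : IsCompact F) :
    ∃ L, ∀ z ∈ F, z.1 ≤ L := by
  by_contra! hF'
  choose f hfF hf using hF'
  set h : ℕ → ℕ := fun ℓ => (Finset.range (ℓ + 1)).sup (fun n => (f n).2.1) + 1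
  obtain ⟨t, ht⟩ := hF.elim_finite_subcover (fun y => sameChain y ∪ growthSet h (y.1 + 1))
    (fun y => isOpen_sameChain_union (isOpen_growthSet h _) fun _ hz hztop =>
      mem_growthSet_of_snd_snd_eq_top h hz hztop)
    fun z _ => mem_iUnion.2 ⟨z, Or.inl ⟨rfl, rfl⟩⟩
  set n := t.sup (fun y => y.1) + 1
  obtain ⟨y, hyt, hy⟩ := mem_iUnion₂.1 (ht (hfF n))
  have hyn : y.1 < n := Nat.lt_succ_of_le (Finset.le_sup (f := fun y : JiaP => y.1) hyt)
  have hfn := hf n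
  rcases hy with ⟨h₁, -⟩ | ⟨-, hidx, -⟩
  · omega
  · have h₁ : h (f n).1 ≤ (f n).2.1 := hidx (by omega)
    have h₂ : (f n).2.1 ≤ (Finset.range ((f n).1 + 1)).sup fun k => (f k).2.1 :=
      Finset.le_sup (f := fun k => (f k).2.1) (Finset.mem_range.2 (by omega))
    simp only [h] at h₁
    omega

theorem wellFiltered : WellFiltered JiaP := by
  refine ⟨t0Space, fun 𝒦 h𝒦 h𝒦K hdir U hU hsub => ?_⟩
  by_contra! hKU
  have hℱdir : DirectedOn (· ⊇ ·) ((· \ U) '' 𝒦) := directedOn_image.2 fun K₁ h₁ K₂ h₂ =>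
    (hdir K₁ h₁ K₂ h₂).imp fun _ ⟨hK₃, h₃₁, h₃₂⟩ =>
      ⟨hK₃, sdiff_subset_sdiff_left h₃₁, sdiff_subset_sdiff_left h₃₂⟩
  obtain ⟨A, hAirr, hA, hAF⟩ := exists_isIrreducible_isClosed_eq_closure_inter (h𝒦.image _)
    (forall_mem_image.2 fun K hK => (h𝒦K K hK).2.1.diff hU)
    (forall_mem_image.2 fun K hK => sdiff_nonempty.2 (hKU K hK)) hℱdir
  obtain ⟨K₀, hK₀⟩ := h𝒦
  have hAK₀ := hAF _ (mem_image_of_mem _ hK₀)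
  obtain ⟨L, hL⟩ := exists_fst_le_of_isCompact (((h𝒦K K₀ hK₀).2.1.diff hU).inter_left hA)
  have hAL : A ⊆ (levelGE (L + 1))ᶜ := hAK₀ ▸ closure_minimal
    (fun z hz => not_le.2 (Nat.lt_succ_of_le (hL z hz))) (isOpen_levelGE _).isClosed_compl
  obtain ⟨x, rfl⟩ := (eq_downSet_or_eq_univ hAirr hA).resolve_right fun h =>
    hAL (h ▸ mem_univ ((L + 1, 0, 0) : JiaP)) (Nat.le_refl _)
  have hxU : x ∉ U := closure_minimal (sdiff_subset_compl K₀ U) hU.isClosed_compl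
    (closure_mono inter_subset_right (hAK₀.subset (JiaLE.refl x)))
  refine hxU (hsub fun K hK => ?_)
  obtain ⟨w, hwx, hwK, -⟩ :=
    closure_nonempty_iff.1 (hAF _ (mem_image_of_mem _ hK) ▸ hAirr.nonempty)
  exact isUpperSetWrt_of_saturated (h𝒦K K hK).2.2 hwK hwx

theorem not_soberSpace : ¬ SoberSpace JiaP := by
  rintro ⟨-, hsober⟩
  obtain ⟨x, hx, -⟩ := hsober univ isIrreducible_univ isClosed_univ
  have hmem : ((x.1 + 1, 0, 0) : JiaP) ∈ closure {x} := hx ▸ mem_univ _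
  rw [closure_singleton] at hmem
  have := JiaLE.fst_le hmem
  omega

end JiaP

/-- Jia's poset is a dcpo whose Scott space is well-filtered but not sober,
and whose irreducible closed subsets are exactly the principal lower sets `↓x` together
with `P` itself. -/
theorem stmt6 :
    (∀ D : Set JiaP, DirectedSubset JiaLE D → ∃ s : JiaP, IsSupWrt JiaLE D s) ∧
      @WellFiltered JiaP JiaTop ∧
      ¬ @SoberSpace JiaP JiaTop ∧
      (∀ A : Set JiaP, JiaIrrCl A ↔ ((∃ x : JiaP, A = {y | JiaLE y x}) ∨ A = Set.univ)) := by
  refine ⟨fun D hD => JiaP.exists_isSupWrt hD, JiaP.wellFiltered, JiaP.not_soberSpace,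
    fun A => ⟨fun hA => JiaP.eq_downSet_or_eq_univ hA.1 hA.2, ?_⟩⟩
  rintro (⟨x, rfl⟩ | rfl)
  · exact ⟨JiaP.closure_singleton x ▸ isIrreducible_singleton.closure, JiaP.isClosed_downSet x⟩
  · exact ⟨JiaP.isIrreducible_univ, isClosed_univ⟩
end

section
/- Let (X, τ) be an ω-well-filtered T₀ space. Then the space (X, CX), where CX is the core compactly generated topology of X, is again ω-well-filtered. -/
open Set TopologicalSpace

universe u

/-!
Probing with the one-point compactification of `ℕ`, which is compact Hausdorff and hence core
compact, shows that every `𝒞X`-open set is sequentially open in `X`. In particular `𝒞X` has the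
specialization order of `X`, so `𝒞X`-compact saturated sets are compact saturated in `X`.
If no member of a countable filtered family `K n` of such sets lies in a `𝒞X`-open `U`, take a
minimal closed set `E` meeting all the sets `K n \ U` of a decreasing subfamily. Minimality makes
points chosen in `E ∩ (K n \ U)` converge to every point of `E`, and ω-well-filteredness of `X` puts
such a point in `⋂ n, K n ⊆ U`: a sequence outside `U` converges into `U`.
-/

open Filter Topology OnePoint

lemma wayBelow_of_subset_isCompact {C : Type*} [TopologicalSpace C] {V K U : Set C}
    (hK : IsCompact K) (hVK : V ⊆ K) (hKU : K ⊆ U) : WayBelow V U := by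
  intro S hS hUS
  obtain ⟨F, hFS, hF, hKF⟩ := hK.elim_finite_subcover_image (c := id) hS
    (by simpa only [id, ← sUnion_eq_biUnion] using hKU.trans hUS)
  exact ⟨hF.toFinset, by simpa using hFS, fun x hx => by simpa using hKF (hVK hx)⟩

lemma coreCompact_of_locallyCompactSpace (C : Type*) [TopologicalSpace C]
    [LocallyCompactSpace C] : CoreCompact C := by
  intro U hU x hx
  obtain ⟨K, hKx, hKU, hK⟩ := local_compact_nhds (hU.mem_nhds hx)
  exact ⟨interior K, isOpen_interior, mem_interior_iff_mem_nhds.mpr hKx,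
    wayBelow_of_subset_isCompact hK interior_subset hKU⟩

section CCGTopology

variable {X : Type u} [tX : TopologicalSpace X]

lemma ccgTopology_le_s7 : ccgTopology X ≤ tX :=
  TopologicalSpace.le_def.mpr fun U hU _ _ _ _ hρ => hρ.isOpen_preimage U hU

lemma ccgOpen.eventually_mem_of_tendsto {V : Set X} (hV : ccgOpen X V) {c : ℕ → X} {x : X}
    (hc : Tendsto c atTop (𝓝 x)) (hx : x ∈ V) : ∀ᶠ n in atTop, c n ∈ V := by
  let f : OnePoint ℕ → X := fun p => p.elim x c
  have hf : Continuous f := (OnePoint.continuous_iff_from_nat f).mpr hc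
  have hcoe : Tendsto (fun n : ℕ => (ULift.up n : ULift.{u} (OnePoint ℕ))) atTop
      (𝓝 (ULift.up ∞)) :=
    continuous_uliftUp.continuousAt.tendsto.comp
      ((OnePoint.continuous_iff_from_nat id).mp continuous_id)
  have hopen := hV (ULift.{u} (OnePoint ℕ)) _ (coreCompact_of_locallyCompactSpace _)
    (f ∘ ULift.down) (hf.comp continuous_uliftDown)
  exact hcoe (hopen.mem_nhds hx)

lemma ccgOpen.mem_of_specializes {V : Set X} (hV : ccgOpen X V) {x y : X} (h : y ⤳ x)
    (hx : x ∈ V) : y ∈ V :=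
  eventually_const.mp <| hV.eventually_mem_of_tendsto (c := fun _ => y)
    (tendsto_const_pure.mono_right (specializes_iff_pure.mp h)) hx

lemma t0Space_ccgTopology [T0Space X] : @T0Space X (ccgTopology X) :=
  @t0Space_of_injective_of_continuous _ _ (ccgTopology X) _ _ Function.injective_id
    (continuous_id_of_le ccgTopology_le_s7) _

lemma IsCompact.of_ccgTopology {K : Set X} (hK : @IsCompact X (ccgTopology X) K) :
    IsCompact K := by
  simpa using @IsCompact.image X X (ccgTopology X) tX K id hK (continuous_id_of_le ccgTopology_le_s7)

lemma exists_mem_specializes_of_forall_isOpen {K : Set X} {y : X}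
    (hy : ∀ G, IsOpen G → K ⊆ G → y ∈ G) : ∃ a ∈ K, y ⤳ a := by
  by_contra! h
  exact hy (closure {y})ᶜ isClosed_closure.isOpen_compl
    (fun a ha hya => h a ha (specializes_iff_mem_closure.mpr hya)) (subset_closure rfl)

lemma Saturated.of_ccgTopology {K : Set X} (hK : @Saturated X (ccgTopology X) K) :
    Saturated K := by
  refine Subset.antisymm (fun x hx => mem_sInter.mpr fun G hG => hG.2 hx) fun y hy => ?_
  obtain ⟨a, ha, hya⟩ :=
    exists_mem_specializes_of_forall_isOpen fun G hG hKG => mem_sInter.mp hy G ⟨hG, hKG⟩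
  rw [hK]
  exact mem_sInter.mpr fun V hV => ccgOpen.mem_of_specializes hV.1 hya (hV.2 ha)

end CCGTopology

section Sequences

variable {X : Type u} [TopologicalSpace X]

lemma exists_isClosed_inter_nonempty_eventually_subset {A : ℕ → Set X} (hA : Antitone A)
    (hne : ∀ n, (A n).Nonempty) (hcpt : ∀ n, IsCompact (A n)) :
    ∃ E, IsClosed E ∧ (∀ n, (E ∩ A n).Nonempty) ∧
      ∀ G, IsOpen G → (E ∩ G).Nonempty → ∀ᶠ n in atTop, E ∩ A n ⊆ G := by
  set 𝓔 := {E : Set X | IsClosed E ∧ ∀ n, (E ∩ A n).Nonempty}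
  have hchain : ∀ c ⊆ 𝓔, IsChain (· ⊆ ·) c → c.Nonempty → ∃ lb ∈ 𝓔, ∀ s ∈ c, lb ⊆ s := by
    intro c hc hch hne
    have : Nonempty c := hne.to_subtype
    refine ⟨⋂₀ c, ⟨isClosed_sInter fun E hE => (hc hE).1, fun n => ?_⟩,
      fun _ => sInter_subset_of_mem⟩
    by_contra! hempty
    rw [inter_comm, sInter_eq_iInter] at hempty
    obtain ⟨⟨E, hE⟩, hAE⟩ := (hcpt n).elim_directed_family_closed _ (fun E => (hc E.2).1) hempty
      (IsChain.directedOn (r := fun s t : Set X => s ⊇ t) hch.symm).directed_val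
    exact ((hc hE).2 n).ne_empty (by rwa [inter_comm])
  obtain ⟨E, -, hE⟩ := zorn_superset_nonempty 𝓔 hchain univ ⟨isClosed_univ, by simpa using hne⟩
  refine ⟨E, hE.prop.1, hE.prop.2, fun G hG hEG => ?_⟩
  -- `E \ G` is a proper closed subset of `E`, so by minimality it misses some `A k`
  have hEG' : E \ G ∉ 𝓔 := fun hmem => by
    obtain ⟨x, hxE, hxG⟩ := hEG
    exact (hE.eq_of_subset hmem sdiff_subset ▸ hxE).2 hxG
  obtain ⟨k, hk⟩ : ∃ k, ¬ (E \ G ∩ A k).Nonempty := by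
    simpa [𝓔, hE.prop.1.sdiff hG] using hEG'
  filter_upwards [eventually_ge_atTop k] with n hn x hx
  by_contra hxG
  exact hk ⟨x, ⟨hx.1, hxG⟩, hA hn hx.2⟩

lemma OmegaWellFiltered.exists_tendsto_mem_iInter (h : OmegaWellFiltered X) {L A : ℕ → Set X}
    (hL : ∀ n, (L n).Nonempty ∧ IsCompact (L n) ∧ Saturated (L n))
    (hLdir : ∀ m n, ∃ k, L k ⊆ L m ∧ L k ⊆ L n)
    (hA : Antitone A) (hAne : ∀ n, (A n).Nonempty) (hAcpt : ∀ n, IsCompact (A n))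
    (hAL : ∀ m, ∃ n, A n ⊆ L m) :
    ∃ u ∈ ⋂ n, L n, ∃ c : ℕ → X, (∀ n, c n ∈ A n) ∧ Tendsto c atTop (𝓝 u) := by
  obtain ⟨E, hEcl, hEA, hEtail⟩ := exists_isClosed_inter_nonempty_eventually_subset hA hAne hAcpt
  obtain ⟨u, huE, huL⟩ : (E ∩ ⋂ n, L n).Nonempty := by
    by_contra! hempty
    obtain ⟨m, hm⟩ := h.2 L hL hLdir Eᶜ hEcl.isOpen_compl fun x hx hxE =>
      hempty.subset ⟨hxE, hx⟩
    obtain ⟨n, hn⟩ := hAL m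
    obtain ⟨x, hxE, hxA⟩ := hEA n
    exact hm (hn hxA) hxE
  choose c hcE hcA using hEA
  refine ⟨u, huL, c, hcA, tendsto_nhds.mpr fun G hG huG => ?_⟩
  exact (hEtail G hG ⟨u, huE, huG⟩).mono fun n hn => hn ⟨hcE n, hcA n⟩

end Sequences

/-- the core compactly generated topology of an ω-well-filtered space is
again ω-well-filtered. -/
theorem stmt7 {X : Type u} [tX : TopologicalSpace X] (h : OmegaWellFiltered X) :
    @OmegaWellFiltered X (ccgTopology X) := by
  have := h.1
  refine ⟨t0Space_ccgTopology, fun K hK hdir U hU hKU => ?_⟩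
  by_contra! hnot
  have hKdir : Directed (· ≥ ·) K := fun m n => hdir m n
  let J := hKdir.sequence K
  obtain ⟨u, hu, c, hcA, hc⟩ := h.exists_tendsto_mem_iInter (L := K) (A := fun n => K (J n) \ U)
    (fun n => ⟨(hK n).1, (hK n).2.1.of_ccgTopology, (hK n).2.2.of_ccgTopology⟩) hdir
    (fun m n hmn => sdiff_subset_sdiff_left (hKdir.sequence_anti hmn))
    (fun n => sdiff_nonempty.mpr (hnot (J n)))
    (fun n => (@IsCompact.diff X (ccgTopology X) _ _ (hK (J n)).2.1 hU).of_ccgTopology)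
    (fun m => ⟨_, sdiff_subset.trans (hKdir.sequence_le m)⟩)
  obtain ⟨n, hn⟩ := (ccgOpen.eventually_mem_of_tendsto hU hc (hKU hu)).exists
  exact (hcA n).2 hn
end
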